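/- arXiv:0903.2589 — 17 statements merged into one kernel-verified Lean document; each statement's English description precedes it below -/
import Mathlib

section
/- Let X be a topological space. Then the standard contact algebra (RC(X), ρ_X) is connected if and only if X is a connected space; that is, X is connected if and only if every regular closed set F ⊆ X with F ≠ ∅ and F ≠ X satisfies F ∩ cl(X \ F) ≠ ∅. -/
open Set

/-- A topological space X is connected if and only if its standard contact
algebra (RC(X), ρ_X) is connected, i.e. every regular closed F with F ≠ ∅ and
F ≠ X satisfies F ρ_X F*, that is, F ∩ cl(X \ F) ≠ ∅.  (Here "connected space"
means that X is not the union of two disjoint nonempty open sets, which in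
Mathlib is `PreconnectedSpace`.) -/
theorem stmt_1 {X : Type*} [TopologicalSpace X] :
    PreconnectedSpace X ↔
      ∀ F : Set X, F = closure (interior F) → F ≠ ∅ → F ≠ univ →
        (F ∩ closure Fᶜ).Nonempty := by
  constructor
  · intro h F hF hne hnu
    by_contra hc
    rw [Set.not_nonempty_iff_eq_empty] at hc
    have hFc : IsClosed F := hF ▸ isClosed_closure
    have hopen : IsOpen F := by
      rw [← isClosed_compl_iff]
      have hsub : closure Fᶜ ⊆ Fᶜ := by
        intro x hx hxF
        have : x ∈ F ∩ closure Fᶜ := ⟨hxF, hx⟩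
        rw [hc] at this
        exact this
      exact closure_eq_iff_isClosed.mp (subset_antisymm hsub subset_closure)
    rcases (isClopen_iff.mp ⟨hFc, hopen⟩) with h | h
    · exact hne h
    · exact hnu h
  · intro h
    constructor
    rw [isPreconnected_iff_subset_of_disjoint]
    intro u v hu hv hcov hdisj
    by_contra hc
    push_neg at hc
    obtain ⟨hnu', hnv⟩ := hc
    have huneU : u ≠ univ := fun heq => hnu' (heq ▸ subset_rfl)
    have hune : u ≠ ∅ := by
      intro heq
      apply hnv
      rw [heq] at hcov
      simpa using hcov
    have hvcomp : v = uᶜ := by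
      apply subset_antisymm
      · intro x hxv hxu
        have : x ∈ univ ∩ (u ∩ v) := ⟨trivial, hxu, hxv⟩
        rw [hdisj] at this
        exact this
      · intro x hxu
        rcases hcov (mem_univ x) with hx | hx
        · exact absurd hx hxu
        · exact hx
    have hclopen : IsClopen u := ⟨by rw [← compl_compl u, ← hvcomp]; exact hv.isClosed_compl, hu⟩
    have hreg : u = closure (interior u) := by
      rw [hclopen.2.interior_eq, hclopen.1.closure_eq]
    obtain ⟨x, hxu, hxc⟩ := h u hreg hune huneU
    rw [hclopen.compl.1.closure_eq] at hxc
    exact hxc hxu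
end

section
/- Let (B, C) be a normal contact algebra. A subset σ ⊆ B is a cluster in (B, C) if and only if there exists an ultrafilter u in B such that σ = {a ∈ B | a C b for every b ∈ u}. Moreover, given a cluster σ and an element a₀ ∈ σ, the ultrafilter u can be chosen so that a₀ ∈ u. -/
/-- The axioms (C1)-(C4) of a contact relation on a Boolean algebra. -/
def ContactRel {B : Type*} [BooleanAlgebra B] (C : B → B → Prop) : Prop :=
  (∀ a : B, a ≠ ⊥ → C a a) ∧
  (∀ a b : B, C a b → a ≠ ⊥ ∧ b ≠ ⊥) ∧
  (∀ a b : B, C a b → C b a) ∧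
  (∀ a b c : B, C a (b ⊔ c) ↔ C a b ∨ C a c)

/-- A normal contact algebra: (C1)-(C4) together with (C5) and (C6). -/
def NormalContact {B : Type*} [BooleanAlgebra B] (C : B → B → Prop) : Prop :=
  ContactRel C ∧
  (∀ a b : B, ¬ C a b → ∃ c : B, ¬ C a c ∧ ¬ C b cᶜ) ∧
  (∀ a : B, a ≠ ⊤ → ∃ b : B, b ≠ ⊥ ∧ ¬ C b a)

/-- A cluster in a contact algebra `(B, C)`: conditions (K1), (K2), (K3). -/
def IsCACluster {B : Type*} [BooleanAlgebra B] (C : B → B → Prop) (σ : Set B) : Prop :=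
  σ.Nonempty ∧
  (∀ a ∈ σ, ∀ b ∈ σ, C a b) ∧
  (∀ a b : B, a ⊔ b ∈ σ → a ∈ σ ∨ b ∈ σ) ∧
  (∀ a : B, (∀ b ∈ σ, C a b) → a ∈ σ)

/-- An ideal of a Boolean algebra (nonempty, downward closed, closed under joins). -/
def IsBAIdeal {B : Type*} [BooleanAlgebra B] (I : Set B) : Prop :=
  I.Nonempty ∧ (∀ a ∈ I, ∀ b : B, b ≤ a → b ∈ I) ∧ (∀ a ∈ I, ∀ b ∈ I, a ⊔ b ∈ I)

/-- A local contact algebra `(B, ρ, IB)`: a contact relation, an ideal of bounded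
elements, and the axioms (BC1), (BC2), (BC3).  Here `a ≪ρ b` is `¬ ρ a bᶜ`. -/
def IsLCA {B : Type*} [BooleanAlgebra B] (ρ : B → B → Prop) (IB : Set B) : Prop :=
  ContactRel ρ ∧ IsBAIdeal IB ∧
  (∀ a ∈ IB, ∀ c : B, ¬ ρ a cᶜ → ∃ b ∈ IB, ¬ ρ a bᶜ ∧ ¬ ρ b cᶜ) ∧
  (∀ a b : B, ρ a b → ∃ c ∈ IB, ρ a (c ⊓ b)) ∧
  (∀ a : B, a ≠ ⊥ → ∃ b ∈ IB, b ≠ ⊥ ∧ ¬ ρ b aᶜ)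

/-- The Alexandroff extension `Cρ` of `ρ` relative to the LCA `(B, ρ, IB)`. -/
def AlexExt {B : Type*} [BooleanAlgebra B] (ρ : B → B → Prop) (IB : Set B)
    (a b : B) : Prop :=
  ρ a b ∨ (a ∉ IB ∧ b ∉ IB)

/-- A δ-ideal of an LCA `(B, ρ, IB)`. -/
def IsDeltaIdeal {B : Type*} [BooleanAlgebra B] (ρ : B → B → Prop) (IB I : Set B) : Prop :=
  IsBAIdeal I ∧ I ⊆ IB ∧ ∀ a ∈ I, ∃ b ∈ I, ¬ ρ a bᶜ

/-- An ultrafilter in a Boolean algebra: a proper filter (upward closed, closed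
under binary meets, not containing ⊥) such that for every a, a ∈ u or aᶜ ∈ u. -/
def IsBAUltrafilter {B : Type*} [BooleanAlgebra B] (u : Set B) : Prop :=
  (∀ a ∈ u, ∀ b : B, a ≤ b → b ∈ u) ∧
  (∀ a ∈ u, ∀ b ∈ u, a ⊓ b ∈ u) ∧
  (⊥ : B) ∉ u ∧
  (∀ a : B, a ∈ u ∨ aᶜ ∈ u)

section StmtAux
variable {B : Type*} [BooleanAlgebra B] {C : B → B → Prop}

lemma contact_mono_right (hC : ContactRel C) {a b b' : B} (h : C a b) (hb : b ≤ b') :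
    C a b' := by
  have := (hC.2.2.2 a b b').2 (Or.inl h)
  rwa [sup_eq_right.mpr hb] at this

lemma contact_mono_left (hC : ContactRel C) {a a' b : B} (h : C a b) (ha : a ≤ a') :
    C a' b :=
  hC.2.2.1 _ _ (contact_mono_right hC (hC.2.2.1 _ _ h) ha)

lemma uf_contact (hC : ContactRel C) {u : Set B} (hu : IsBAUltrafilter u) :
    ∀ a ∈ u, ∀ b ∈ u, C a b := by
  intro a ha b hb
  have hm : a ⊓ b ∈ u := hu.2.1 a ha b hb
  have hne : a ⊓ b ≠ ⊥ := fun h => hu.2.2.1 (h ▸ hm)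
  exact contact_mono_left hC (contact_mono_right hC (hC.1 _ hne) inf_le_right) inf_le_left

lemma sigma_is_cluster (hC : NormalContact C) {u : Set B} (hu : IsBAUltrafilter u) :
    IsCACluster C {a : B | ∀ b ∈ u, C a b} := by
  obtain ⟨hCr, hC5, _⟩ := hC
  have husub : ∀ a ∈ u, a ∈ {a : B | ∀ b ∈ u, C a b} := fun a ha b hb =>
    uf_contact hCr hu a ha b hb
  have htop : (⊤ : B) ∈ u := by
    rcases hu.2.2.2 ⊤ with h | h
    · exact h
    · rw [compl_top] at h; exact absurd h hu.2.2.1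
  refine ⟨⟨⊤, husub ⊤ htop⟩, ?_, ?_, ?_⟩
  · intro a ha b hb
    by_contra hab
    obtain ⟨c, hac, hbc⟩ := hC5 a b hab
    rcases hu.2.2.2 c with hc | hc
    · exact hac (ha c hc)
    · exact hbc (hb cᶜ hc)
  · intro a b hab
    by_contra hcon
    simp only [Set.mem_setOf_eq, not_or, not_forall] at hcon
    obtain ⟨⟨c, hc, hac⟩, ⟨d, hd, hbd⟩⟩ := hcon
    have h1 : C (a ⊔ b) (c ⊓ d) := hab (c ⊓ d) (hu.2.1 c hc d hd)
    have h2 : C (c ⊓ d) a ∨ C (c ⊓ d) b := (hCr.2.2.2 _ a b).1 (hCr.2.2.1 _ _ h1)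
    rcases h2 with h2 | h2
    · exact hac (contact_mono_right hCr (hCr.2.2.1 _ _ h2) inf_le_left)
    · exact hbd (contact_mono_right hCr (hCr.2.2.1 _ _ h2) inf_le_right)
  · intro a h b hb
    exact h b (husub b hb)

lemma cluster_to_uf (hC : NormalContact C) {σ : Set B} (hσ : IsCACluster C σ)
    {a₀ : B} (ha₀ : a₀ ∈ σ) :
    ∃ u : Set B, IsBAUltrafilter u ∧ a₀ ∈ u ∧ σ = {a : B | ∀ b ∈ u, C a b} := by
  obtain ⟨hCr, hC5, _⟩ := hC
  obtain ⟨-, hK1, hK2, hK3⟩ := hσ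
  -- σ is upward closed and omits ⊥
  have hup : ∀ a ∈ σ, ∀ a' : B, a ≤ a' → a' ∈ σ := by
    intro a ha a' haa'
    exact hK3 a' fun b hb => contact_mono_left hCr (hK1 a ha b hb) haa'
  have hbot : (⊥ : B) ∉ σ := fun h => (hCr.2.1 _ _ (hK1 ⊥ h ⊥ h)).1 rfl
  -- the poset of filters inside σ containing a₀
  set S : Set (Set B) :=
    {F | (∀ x ∈ F, ∀ y : B, x ≤ y → y ∈ F) ∧ (∀ x ∈ F, ∀ y ∈ F, x ⊓ y ∈ F) ∧
      a₀ ∈ F ∧ F ⊆ σ} with hS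
  have hprin : {b : B | a₀ ≤ b} ∈ S := by
    refine ⟨fun x hx y hxy => le_trans hx hxy,
      fun x hx y hy => le_inf hx hy, le_refl a₀, fun x hx => hup a₀ ha₀ x hx⟩
  obtain ⟨m, hm0, hmS, hmax⟩ : ∃ m, {b : B | a₀ ≤ b} ⊆ m ∧ Maximal (· ∈ S) m := by
    apply zorn_subset_nonempty S ?_ _ hprin
    intro c hcS hchain hcne
    refine ⟨⋃₀ c, ⟨?_, ?_, ?_, ?_⟩, fun s hs => Set.subset_sUnion_of_mem hs⟩
    · rintro x ⟨F, hF, hxF⟩ y hxy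
      exact ⟨F, hF, (hcS hF).1 x hxF y hxy⟩
    · rintro x ⟨F, hF, hxF⟩ y ⟨G, hG, hyG⟩
      rcases hchain.total hF hG with h | h
      · exact ⟨G, hG, (hcS hG).2.1 x (h hxF) y hyG⟩
      · exact ⟨F, hF, (hcS hF).2.1 x hxF y (h hyG)⟩
    · obtain ⟨F, hF⟩ := hcne
      exact ⟨F, hF, (hcS hF).2.2.1⟩
    · rintro x ⟨F, hF, hxF⟩
      exact (hcS hF).2.2.2 hxF
  obtain ⟨hmup, hmmeet, ha₀m, hmσ⟩ := hmS
  -- key: if a ∉ m then some b ∈ m has b ⊓ a ∉ σ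
  have hkey : ∀ a : B, a ∉ m → ∃ b ∈ m, b ⊓ a ∉ σ := by
    intro a ham
    by_contra hcon
    push_neg at hcon
    set F' : Set B := {x | ∃ b ∈ m, b ⊓ a ≤ x} with hF'
    have hF'S : F' ∈ S := by
      refine ⟨?_, ?_, ⟨a₀, ha₀m, inf_le_left⟩, ?_⟩
      · rintro x ⟨b, hb, hbx⟩ y hxy
        exact ⟨b, hb, le_trans hbx hxy⟩
      · rintro x ⟨b, hb, hbx⟩ y ⟨b', hb', hb'y⟩
        exact ⟨b ⊓ b', hmmeet b hb b' hb',
          le_inf (le_trans (inf_le_inf_right a inf_le_left) hbx)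
            (le_trans (inf_le_inf_right a inf_le_right) hb'y)⟩
      · rintro x ⟨b, hb, hbx⟩
        exact hup _ (hcon b hb) x hbx
    have hsub : m ⊆ F' := fun b hb => ⟨b, hb, inf_le_left⟩
    have : F' ⊆ m := hmax hF'S hsub
    exact ham (this ⟨a₀, ha₀m, inf_le_right⟩)
  -- m is an ultrafilter
  have hult : IsBAUltrafilter m := by
    refine ⟨hmup, hmmeet, fun h => hbot (hmσ h), ?_⟩
    intro a
    by_contra hcon
    push_neg at hcon
    obtain ⟨b₁, hb₁, hb₁a⟩ := hkey a hcon.1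
    obtain ⟨b₂, hb₂, hb₂a⟩ := hkey aᶜ hcon.2
    have hb : b₁ ⊓ b₂ ∈ σ := hmσ (hmmeet b₁ hb₁ b₂ hb₂)
    have heq : (b₁ ⊓ b₂ ⊓ a) ⊔ (b₁ ⊓ b₂ ⊓ aᶜ) = b₁ ⊓ b₂ := by
      rw [← inf_sup_left, sup_compl_eq_top, inf_top_eq]
    rcases hK2 (b₁ ⊓ b₂ ⊓ a) (b₁ ⊓ b₂ ⊓ aᶜ) (by rw [heq]; exact hb) with h | h
    · exact hb₁a (hup _ h _ (inf_le_inf_right a inf_le_left))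
    · exact hb₂a (hup _ h _ (inf_le_inf_right aᶜ inf_le_right))
  refine ⟨m, hult, ha₀m, ?_⟩
  ext a
  constructor
  · intro ha b hb
    exact hK1 a ha b (hmσ hb)
  · intro ha
    apply hK3
    intro c hc
    by_contra hac
    obtain ⟨d, had, hcd⟩ := hC5 a c hac
    rcases hult.2.2.2 d with hd | hd
    · exact had (ha d hd)
    · exact hcd (hK1 c hc dᶜ (hmσ hd))

end StmtAux

/-- In a normal contact algebra (B, C), a subset σ is a cluster iff there is an
ultrafilter u with σ = {a | a C b for every b ∈ u}; moreover, given a cluster σ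
and a₀ ∈ σ, the ultrafilter u may be chosen with a₀ ∈ u. -/

theorem stmt_3 {B : Type*} [BooleanAlgebra B] (C : B → B → Prop)
    (hC : NormalContact C) (σ : Set B) :
    (IsCACluster C σ ↔
      ∃ u : Set B, IsBAUltrafilter u ∧ σ = {a : B | ∀ b ∈ u, C a b}) ∧
    (IsCACluster C σ → ∀ a₀ ∈ σ,
      ∃ u : Set B, IsBAUltrafilter u ∧ a₀ ∈ u ∧ σ = {a : B | ∀ b ∈ u, C a b}) := by
  constructor
  · constructor
    · intro hσ
      obtain ⟨⟨a₀, ha₀⟩, -⟩ := id hσ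
      obtain ⟨u, hu, -, heq⟩ := cluster_to_uf hC hσ ha₀
      exact ⟨u, hu, heq⟩
    · rintro ⟨u, hu, rfl⟩
      exact sigma_is_cluster hC hu
  · intro hσ a₀ ha₀
    exact cluster_to_uf hC hσ ha₀
end

section
/- Let (B, C) be a normal contact algebra, σ a cluster in (B, C), and a ∈ B with a ∉ σ. Then there exists b ∈ B such that b ∉ σ and a ≪ b (i.e. ¬(a C b*)). -/
/-- Let (B, C) be a normal contact algebra, σ a cluster in (B, C), and a ∈ B
with a ∉ σ.  Then there exists b ∈ B with b ∉ σ and a ≪ b (i.e. ¬(a C bᶜ)). -/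
theorem stmt_4 {B : Type*} [BooleanAlgebra B] (C : B → B → Prop)
    (hC : NormalContact C) (σ : Set B) (hσ : IsCACluster C σ)
    (a : B) (ha : a ∉ σ) :
    ∃ b : B, b ∉ σ ∧ ¬ C a bᶜ := by
  obtain ⟨hne, hK1, hK2, hK3⟩ := hσ
  obtain ⟨hCR, hC5, hC6⟩ := hC
  -- since a ∉ σ, there is d ∈ σ with ¬ C a d
  have : ¬ ∀ d ∈ σ, C a d := fun h => ha (hK3 a h)
  push_neg at this
  obtain ⟨d, hd, had⟩ := this
  obtain ⟨c, hac, hdc⟩ := hC5 a d had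
  refine ⟨cᶜ, fun hmem => hdc (hK1 d hd cᶜ hmem), ?_⟩
  simpa using hac
end

section
/- Let (B, ρ, IB) be a local contact algebra and let Cρ be its Alexandroff extension, defined by a Cρ b iff (a ρ b, or both a ∉ IB and b ∉ IB). Then (B, Cρ) is a normal contact algebra, i.e. Cρ satisfies axioms (C1)–(C6). -/
/-- If (B, ρ, IB) is a local contact algebra then its Alexandroff extension Cρ,
defined by a Cρ b iff (a ρ b or both a ∉ IB and b ∉ IB), turns (B, Cρ) into a
normal contact algebra, i.e. Cρ satisfies (C1)-(C6). -/
theorem stmt_5 {B : Type*} [BooleanAlgebra B] (ρ : B → B → Prop) (IB : Set B)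
    (h : IsLCA ρ IB) :
    NormalContact (AlexExt ρ IB) := by
  obtain ⟨⟨hC1, hC2, hC3, hC4⟩, ⟨⟨x, hx⟩, hdown, hjoin⟩, hBC1, hBC2, hBC3⟩ := h
  have hbot : (⊥ : B) ∈ IB := hdown x hx ⊥ bot_le
  refine ⟨⟨?_, ?_, ?_, ?_⟩, ?_, ?_⟩
  · intro a ha; exact Or.inl (hC1 a ha)
  · rintro a b (hab | ⟨ha, hb⟩)
    · exact hC2 a b hab
    · exact ⟨fun e => ha (e ▸ hbot), fun e => hb (e ▸ hbot)⟩
  · rintro a b (hab | ⟨ha, hb⟩)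
    · exact Or.inl (hC3 a b hab)
    · exact Or.inr ⟨hb, ha⟩
  · intro a b c
    constructor
    · rintro (hab | ⟨ha, hbc⟩)
      · rcases (hC4 a b c).mp hab with h1 | h2
        · exact Or.inl (Or.inl h1)
        · exact Or.inr (Or.inl h2)
      · by_cases hb : b ∈ IB
        · by_cases hc : c ∈ IB
          · exact absurd (hjoin b hb c hc) hbc
          · exact Or.inr (Or.inr ⟨ha, hc⟩)
        · exact Or.inl (Or.inr ⟨ha, hb⟩)
    · rintro ((hab | ⟨ha, hb⟩) | (hac | ⟨ha, hc⟩))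
      · exact Or.inl ((hC4 a b c).mpr (Or.inl hab))
      · exact Or.inr ⟨ha, fun e => hb (hdown _ e b le_sup_left)⟩
      · exact Or.inl ((hC4 a b c).mpr (Or.inr hac))
      · exact Or.inr ⟨ha, fun e => hc (hdown _ e c le_sup_right)⟩
  · -- C5
    intro a b hab
    rw [AlexExt, not_or, not_and_or, not_not, not_not] at hab
    obtain ⟨hnab, hIB⟩ := hab
    rcases hIB with ha | hb
    · have hab' : ¬ ρ a (bᶜ)ᶜ := by rwa [compl_compl]
      obtain ⟨d, hd, had, hdb⟩ := hBC1 a ha bᶜ hab'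
      rw [compl_compl] at hdb
      refine ⟨dᶜ, ?_, ?_⟩
      · rintro (h1 | ⟨h2, _⟩)
        · exact had h1
        · exact h2 ha
      · rw [compl_compl]
        rintro (h1 | ⟨_, h2⟩)
        · exact hdb (hC3 b d h1)
        · exact h2 hd
    · have hba : ¬ ρ b (aᶜ)ᶜ := by
        rw [compl_compl]; exact fun h1 => hnab (hC3 b a h1)
      obtain ⟨d, hd, hbd, hda⟩ := hBC1 b hb aᶜ hba
      rw [compl_compl] at hda
      refine ⟨d, ?_, ?_⟩
      · rintro (h1 | ⟨_, h2⟩)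
        · exact hda (hC3 a d h1)
        · exact h2 hd
      · rintro (h1 | ⟨h2, _⟩)
        · exact hbd h1
        · exact h2 hb
  · -- C6
    intro a ha
    have : aᶜ ≠ ⊥ := by simpa using ha
    obtain ⟨b, hb, hb0, hba⟩ := hBC3 aᶜ this
    rw [compl_compl] at hba
    refine ⟨b, hb0, ?_⟩
    rintro (h1 | ⟨h2, _⟩)
    · exact hba h1
    · exact h2 hb
end

section
/- Let (B, ρ, IB) be a local contact algebra with 1 ∉ IB. Then σ∞ = {b ∈ B | b ∉ IB} is a cluster in (B, ρ, IB), i.e. a cluster in the normal contact algebra (B, Cρ), where Cρ is the Alexandroff extension of ρ. -/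
/-- If (B, ρ, IB) is a local contact algebra with ⊤ ∉ IB, then
σ∞ = {b | b ∉ IB} is a cluster in (B, ρ, IB), i.e. a cluster in the normal
contact algebra (B, Cρ), where Cρ is the Alexandroff extension of ρ. -/
theorem stmt_6 {B : Type*} [BooleanAlgebra B] (ρ : B → B → Prop) (IB : Set B)
    (h : IsLCA ρ IB) (htop : (⊤ : B) ∉ IB) :
    IsCACluster (AlexExt ρ IB) {b : B | b ∉ IB} := by
  obtain ⟨hρ, ⟨_, hdown, hjoin⟩, hBC1, hBC2, hBC3⟩ := h
  refine ⟨⟨⊤, htop⟩, ?_, ?_, ?_⟩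
  · intro a ha b hb; exact Or.inr ⟨ha, hb⟩
  · intro a b hab
    by_contra hc
    push_neg at hc
    obtain ⟨ha, hb⟩ := hc
    simp only [Set.mem_setOf_eq, not_not] at ha hb hab
    exact hab (hjoin a ha b hb)
  · intro a hA
    simp only [Set.mem_setOf_eq]
    intro haI
    have hbot : ¬ ρ a (⊤ : B)ᶜ := by
      simp only [compl_top]
      intro hcon
      exact (hρ.2.1 a ⊥ hcon).2 rfl
    obtain ⟨b, hbI, hab, -⟩ := hBC1 a haI ⊤ hbot
    have hbc : bᶜ ∉ IB := by
      intro hbcI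
      exact htop (by simpa using hjoin b hbI bᶜ hbcI)
    have := hA bᶜ hbc
    rcases this with h1 | h2
    · exact hab h1
    · exact h2.1 haI
end

section
/- Let X be a locally compact Hausdorff space. Then (RC(X), ρ_X, CR(X)) is a local contact algebra: ρ_X satisfies the contact axioms (C1)–(C4) on the Boolean algebra RC(X), CR(X) is an ideal of RC(X), and the axioms (BC1), (BC2), (BC3) hold. Moreover, for every x ∈ X, the set σ_x = {F ∈ RC(X) | x ∈ F} is a bounded cluster in (RC(X), ρ_X, CR(X)). -/
open Set

/-- The regular closed subsets of a topological space. -/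
def RegClosed (X : Type*) [TopologicalSpace X] : Set (Set X) :=
  {F : Set X | F = closure (interior F)}

/-- The compact regular closed subsets of a topological space. -/
def CompRegClosed (X : Type*) [TopologicalSpace X] : Set (Set X) :=
  {F : Set X | F ∈ RegClosed X ∧ IsCompact F}

/-- The Alexandroff extension of the standard contact relation of X relative to
the ideal of compact regular closed sets:  F Cρ G iff F ∩ G ≠ ∅ or both F and G
are unbounded (not compact regular closed). -/
def stdAlexExt (X : Type*) [TopologicalSpace X] (F G : Set X) : Prop :=
  (F ∩ G).Nonempty ∨ (F ∉ CompRegClosed X ∧ G ∉ CompRegClosed X)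

lemma regClosed_closure_open {X : Type*} [TopologicalSpace X] {U : Set X}
    (hU : IsOpen U) : closure U ∈ RegClosed X := by
  refine Set.Subset.antisymm ?_ ?_
  · exact closure_mono (hU.subset_interior_closure)
  · exact (closure_mono interior_subset).trans (by rw [closure_closure])

lemma regClosed_isClosed {X : Type*} [TopologicalSpace X] {F : Set X}
    (hF : F ∈ RegClosed X) : IsClosed F := by
  rw [show F = closure (interior F) from hF]; exact isClosed_closure

/-- a compact regular closed neighbourhood inside any open neighbourhood -/
lemma compRC_nbhd {X : Type*} [TopologicalSpace X] [LocallyCompactSpace X]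
    [T2Space X] {x : X} {U : Set X} (hU : IsOpen U) (hx : x ∈ U) :
    ∃ G ∈ CompRegClosed X, x ∈ interior G ∧ G ⊆ U := by
  obtain ⟨K, hK, hxK, hKU⟩ := exists_compact_subset hU hx
  refine ⟨closure (interior K), ⟨regClosed_closure_open isOpen_interior, ?_⟩, ?_, ?_⟩
  · exact hK.of_isClosed_subset isClosed_closure
      ((closure_mono interior_subset).trans (by rw [hK.isClosed.closure_eq]))
  · exact isOpen_interior.subset_interior_closure hxK
  · exact ((closure_mono interior_subset).trans (by rw [hK.isClosed.closure_eq])).trans hKU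

lemma not_nonempty_inter_closure_compl {X : Type*} [TopologicalSpace X]
    {F G : Set X} : ¬ (F ∩ closure Gᶜ).Nonempty ↔ F ⊆ interior G := by
  rw [Set.not_nonempty_iff_eq_empty, closure_compl, ← Set.diff_eq, Set.diff_eq_empty]

/-- For a locally compact Hausdorff space X, the triple
(RC(X), ρ_X, CR(X)) is a local contact algebra (stated with all operations of
the Boolean algebra RC(X) spelled out on regular closed sets: meet is
cl(int(F ∩ G)), join is union, complement is F* = cl(Fᶜ), 0 = ∅, 1 = X, and
F ≪ρ G means F ∩ cl(Gᶜ) = ∅); moreover, for every x ∈ X the set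
σ_x = {F ∈ RC(X) | x ∈ F} is a bounded cluster in it. -/
theorem stmt_7 {X : Type*} [TopologicalSpace X] [LocallyCompactSpace X]
    [T2Space X] :
    -- (C1)
    (∀ F ∈ RegClosed X, F ≠ ∅ → (F ∩ F).Nonempty) ∧
    -- (C2)
    (∀ F ∈ RegClosed X, ∀ G ∈ RegClosed X, (F ∩ G).Nonempty → F ≠ ∅ ∧ G ≠ ∅) ∧
    -- (C3)
    (∀ F ∈ RegClosed X, ∀ G ∈ RegClosed X, (F ∩ G).Nonempty → (G ∩ F).Nonempty) ∧
    -- (C4)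
    (∀ F ∈ RegClosed X, ∀ G ∈ RegClosed X, ∀ H ∈ RegClosed X,
      ((F ∩ (G ∪ H)).Nonempty ↔ (F ∩ G).Nonempty ∨ (F ∩ H).Nonempty)) ∧
    -- CR(X) is an ideal of RC(X)
    (∅ : Set X) ∈ CompRegClosed X ∧
    (∀ F ∈ CompRegClosed X, ∀ G ∈ RegClosed X, G ⊆ F → G ∈ CompRegClosed X) ∧
    (∀ F ∈ CompRegClosed X, ∀ G ∈ CompRegClosed X, F ∪ G ∈ CompRegClosed X) ∧
    -- (BC1)
    (∀ F ∈ CompRegClosed X, ∀ H ∈ RegClosed X, ¬ (F ∩ closure Hᶜ).Nonempty →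
      ∃ G ∈ CompRegClosed X,
        ¬ (F ∩ closure Gᶜ).Nonempty ∧ ¬ (G ∩ closure Hᶜ).Nonempty) ∧
    -- (BC2)
    (∀ F ∈ RegClosed X, ∀ G ∈ RegClosed X, (F ∩ G).Nonempty →
      ∃ H ∈ CompRegClosed X, (F ∩ closure (interior (H ∩ G))).Nonempty) ∧
    -- (BC3)
    (∀ F ∈ RegClosed X, F ≠ ∅ →
      ∃ G ∈ CompRegClosed X, G ≠ ∅ ∧ ¬ (G ∩ closure Fᶜ).Nonempty) ∧
    -- σ_x is a bounded cluster for every x ∈ X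
    (∀ x : X,
      {F : Set X | F ∈ RegClosed X ∧ x ∈ F}.Nonempty ∧
      (∀ F ∈ {F : Set X | F ∈ RegClosed X ∧ x ∈ F},
        ∀ G ∈ {F : Set X | F ∈ RegClosed X ∧ x ∈ F}, stdAlexExt X F G) ∧
      (∀ F ∈ RegClosed X, ∀ G ∈ RegClosed X,
        F ∪ G ∈ {F : Set X | F ∈ RegClosed X ∧ x ∈ F} →
        F ∈ {F : Set X | F ∈ RegClosed X ∧ x ∈ F} ∨
        G ∈ {F : Set X | F ∈ RegClosed X ∧ x ∈ F}) ∧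
      (∀ F ∈ RegClosed X,
        (∀ G ∈ {F : Set X | F ∈ RegClosed X ∧ x ∈ F}, stdAlexExt X F G) →
        F ∈ {F : Set X | F ∈ RegClosed X ∧ x ∈ F}) ∧
      ({F : Set X | F ∈ RegClosed X ∧ x ∈ F} ∩ CompRegClosed X).Nonempty) := by
  
  refine ⟨?_, ?_, ?_, ?_, ?_, ?_, ?_, ?_, ?_, ?_, ?_⟩
  · intro F _ hF
    rw [Set.inter_self]
    exact Set.nonempty_iff_ne_empty.mpr hF
  · rintro F _ G _ ⟨x, hxF, hxG⟩
    exact ⟨Set.nonempty_iff_ne_empty.mp ⟨x, hxF⟩, Set.nonempty_iff_ne_empty.mp ⟨x, hxG⟩⟩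
  · intro F _ G _ h
    rwa [Set.inter_comm]
  · intro F _ G _ H _
    rw [Set.inter_union_distrib_left, Set.union_nonempty]
  · exact ⟨by simp [RegClosed], isCompact_empty⟩
  · rintro F ⟨_, hFc⟩ G hG hsub
    exact ⟨hG, hFc.of_isClosed_subset (regClosed_isClosed hG) hsub⟩
  · rintro F ⟨hF, hFc⟩ G ⟨hG, hGc⟩
    refine ⟨Set.Subset.antisymm ?_ ?_, hFc.union hGc⟩
    · refine Set.union_subset ?_ ?_
      · exact (le_of_eq hF).trans (closure_mono (interior_mono Set.subset_union_left))
      · exact (le_of_eq hG).trans (closure_mono (interior_mono Set.subset_union_right))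
    · exact (closure_mono interior_subset).trans
        (by rw [((regClosed_isClosed hF).union (regClosed_isClosed hG)).closure_eq])
  · -- BC1
    rintro F ⟨hF, hFc⟩ H _ hFH
    rw [not_nonempty_inter_closure_compl] at hFH
    obtain ⟨L, hLc, hFL, hLH⟩ := exists_compact_between hFc isOpen_interior hFH
    have hLcl : closure (interior L) ⊆ L :=
      (closure_mono interior_subset).trans (by rw [hLc.isClosed.closure_eq])
    refine ⟨closure (interior L),
      ⟨regClosed_closure_open isOpen_interior, hLc.of_isClosed_subset isClosed_closure hLcl⟩,
      ?_, ?_⟩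
    · rw [not_nonempty_inter_closure_compl]
      exact hFL.trans isOpen_interior.subset_interior_closure
    · rw [not_nonempty_inter_closure_compl]
      exact hLcl.trans hLH
  · -- BC2
    rintro F _ G hG ⟨x, hxF, hxG⟩
    obtain ⟨H, hH, hxH, _⟩ := compRC_nbhd isOpen_univ (Set.mem_univ x)
    refine ⟨H, hH, x, hxF, ?_⟩
    rw [mem_closure_iff]
    intro V hV hxV
    have hxG' : x ∈ closure (interior G) := hG ▸ hxG
    rw [mem_closure_iff] at hxG'
    obtain ⟨y, hyVH, hyG⟩ := hxG' (V ∩ interior H) (hV.inter isOpen_interior) ⟨hxV, hxH⟩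
    refine ⟨y, hyVH.1, ?_⟩
    rw [show interior (H ∩ G) = interior H ∩ interior G from interior_inter]
    exact ⟨hyVH.2, hyG⟩
  · -- BC3
    intro F hF hFne
    have : (interior F).Nonempty := by
      by_contra h
      rw [Set.not_nonempty_iff_eq_empty] at h
      exact hFne (by rw [hF, h, closure_empty])
    obtain ⟨x, hx⟩ := this
    obtain ⟨G, hG, hxG, hGF⟩ := compRC_nbhd isOpen_interior hx
    refine ⟨G, hG, ?_, ?_⟩
    · exact Set.nonempty_iff_ne_empty.mp ⟨x, interior_subset hxG⟩
    · rw [not_nonempty_inter_closure_compl]; exact hGF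
  · -- cluster
    intro x
    refine ⟨⟨Set.univ, by simp [RegClosed], Set.mem_univ x⟩, ?_, ?_, ?_, ?_⟩
    · rintro F ⟨_, hxF⟩ G ⟨_, hxG⟩
      exact Or.inl ⟨x, hxF, hxG⟩
    · rintro F hF G hG ⟨_, hx⟩
      rcases hx with h | h
      · exact Or.inl ⟨hF, h⟩
      · exact Or.inr ⟨hG, h⟩
    · intro F hF hall
      refine ⟨hF, ?_⟩
      by_contra hxF
      obtain ⟨G, hGc, hxG, hGF⟩ :=
        compRC_nbhd (regClosed_isClosed hF).isOpen_compl hxF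
      rcases hall G ⟨hGc.1, interior_subset hxG⟩ with ⟨y, hyF, hyG⟩ | ⟨_, hGnc⟩
      · exact hGF hyG hyF
      · exact hGnc hGc
    · obtain ⟨G, hG, hxG, _⟩ := compRC_nbhd isOpen_univ (Set.mem_univ x)
      exact ⟨G, ⟨hG.1, interior_subset hxG⟩, hG⟩
end

section
/- Let (A, ρ, IB) be a local contact algebra. Then the poset of δ-ideals of (A, ρ, IB) ordered by inclusion is a frame. Concretely: (i) the join in the ideal lattice of A of any family of δ-ideals (i.e. the ideal generated by their union) is again a δ-ideal; (ii) the intersection of two δ-ideals is a δ-ideal; and (iii) for any δ-ideal J and any family S of δ-ideals, J ∩ (⋁ S) = ⋁ {J ∩ I | I ∈ S}, where ⋁ denotes the join of ideals. -/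
/-- The join, in the ideal lattice of a Boolean algebra, of a family of ideals:
the smallest ideal containing all members of the family (the ideal generated by
their union). -/
def idealJoin {B : Type*} [BooleanAlgebra B] (S : Set (Set B)) : Set B :=
  ⋂₀ {K : Set B | IsBAIdeal K ∧ ∀ I ∈ S, I ⊆ K}

section Ideals
variable {A : Type*} [BooleanAlgebra A]

lemma IsBAIdeal.bot_mem {I : Set A} (hI : IsBAIdeal I) : ⊥ ∈ I :=
  let ⟨⟨a, ha⟩, hdown, _⟩ := hI
  hdown a ha ⊥ bot_le

lemma IsBAIdeal.inter {I J : Set A} (hI : IsBAIdeal I) (hJ : IsBAIdeal J) :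
    IsBAIdeal (I ∩ J) :=
  ⟨⟨⊥, hI.bot_mem, hJ.bot_mem⟩,
    fun a ha b hb => ⟨hI.2.1 a ha.1 b hb, hJ.2.1 a ha.2 b hb⟩,
    fun a ha b hb => ⟨hI.2.2 a ha.1 b hb.1, hJ.2.2 a ha.2 b hb.2⟩⟩

lemma isBAIdeal_idealJoin (S : Set (Set A)) : IsBAIdeal (idealJoin S) :=
  ⟨⟨⊥, Set.mem_sInter.2 fun _ hK => hK.1.bot_mem⟩,
    fun _ ha b hb => Set.mem_sInter.2 fun K hK => hK.1.2.1 _ (ha K hK) b hb,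
    fun _ ha _ hb => Set.mem_sInter.2 fun K hK => hK.1.2.2 _ (ha K hK) _ (hb K hK)⟩

lemma subset_idealJoin {S : Set (Set A)} {I : Set A} (hI : I ∈ S) : I ⊆ idealJoin S :=
  fun _ ha => Set.mem_sInter.2 fun _ hK => hK.2 I hI ha

lemma idealJoin_subset {S : Set (Set A)} {K : Set A} (hK : IsBAIdeal K)
    (h : ∀ I ∈ S, I ⊆ K) : idealJoin S ⊆ K :=
  fun _ hx => Set.mem_sInter.1 hx K ⟨hK, h⟩

/-- The hard inclusion: the `x` with `a ⊓ x` in the right-hand side for every `a ∈ J` form an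
ideal containing every `I ∈ S`. -/
lemma inter_idealJoin {J : Set A} (hJ : IsBAIdeal J) {S : Set (Set A)}
    (hS : ∀ I ∈ S, IsBAIdeal I) :
    J ∩ idealJoin S = idealJoin {K : Set A | ∃ I ∈ S, K = J ∩ I} := by
  set T := {K : Set A | ∃ I ∈ S, K = J ∩ I}
  have hT := isBAIdeal_idealJoin T
  apply Set.Subset.antisymm
  · have hmeet : IsBAIdeal {x | ∀ a ∈ J, a ⊓ x ∈ idealJoin T} := by
      refine ⟨⟨⊥, fun a _ => by simpa using hT.bot_mem⟩, ?_, ?_⟩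
      · exact fun x hx y hyx a ha => hT.2.1 _ (hx a ha) _ (inf_le_inf_left a hyx)
      · intro x hx y hy a ha
        rw [inf_sup_left]
        exact hT.2.2 _ (hx a ha) _ (hy a ha)
    have hS_sub : ∀ I ∈ S, I ⊆ {x | ∀ a ∈ J, a ⊓ x ∈ idealJoin T} :=
      fun I hI x hx a ha => subset_idealJoin (S := T) ⟨I, hI, rfl⟩
        ⟨hJ.2.1 a ha _ inf_le_left, (hS I hI).2.1 x hx _ inf_le_right⟩
    rintro x ⟨hxJ, hxS⟩
    simpa using idealJoin_subset hmeet hS_sub hxS x hxJ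
  · refine idealJoin_subset (hJ.inter (isBAIdeal_idealJoin S)) ?_
    rintro _ ⟨I, hI, rfl⟩
    exact Set.inter_subset_inter_right J (subset_idealJoin hI)

end Ideals

/-- The paper's `a ≪ρ b`. -/
def WellInside {A : Type*} [BooleanAlgebra A] (ρ : A → A → Prop) (a b : A) : Prop :=
  ¬ ρ a bᶜ

namespace ContactRel
variable {A : Type*} [BooleanAlgebra A] {ρ : A → A → Prop}

lemma mono (hρ : ContactRel ρ) {a b a' b' : A} (hab : ρ a b) (ha : a ≤ a') (hb : b ≤ b') : ρ a' b' := by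
  have hab' : ρ a b' := by
    simpa [sup_eq_right.mpr hb] using (hρ.2.2.2 a b b').mpr (Or.inl hab)
  have hba' : ρ b' a' := by
    simpa [sup_eq_right.mpr ha] using (hρ.2.2.2 b' a a').mpr (Or.inl (hρ.2.2.1 _ _ hab'))
  exact hρ.2.2.1 _ _ hba'

lemma sup_left_iff (hρ : ContactRel ρ) {a b c : A} : ρ (a ⊔ b) c ↔ ρ a c ∨ ρ b c := by
  have hsymm : ∀ x y, ρ x y ↔ ρ y x := fun x y => ⟨hρ.2.2.1 x y, hρ.2.2.1 y x⟩
  rw [hsymm, hρ.2.2.2, hsymm c, hsymm c]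

lemma wellInside_mono (hρ : ContactRel ρ) {a b a' b' : A} (h : WellInside ρ a b) (ha : a' ≤ a) (hb : b ≤ b') :
    WellInside ρ a' b' :=
  fun h' => h (hρ.mono h' ha (compl_le_compl hb))

lemma bot_wellInside (hρ : ContactRel ρ) (b : A) : WellInside ρ ⊥ b :=
  fun h => (hρ.2.1 _ _ h).1 rfl

lemma wellInside_sup (hρ : ContactRel ρ) {a b c d : A} (hab : WellInside ρ a b) (hcd : WellInside ρ c d) :
    WellInside ρ (a ⊔ c) (b ⊔ d) := by
  intro h
  rcases hρ.sup_left_iff.mp h with h | h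
  · exact hab (hρ.mono h le_rfl (compl_le_compl le_sup_left))
  · exact hcd (hρ.mono h le_rfl (compl_le_compl le_sup_right))

lemma wellInside_inf (hρ : ContactRel ρ) {a b c : A} (hab : WellInside ρ a b) (hac : WellInside ρ a c) :
    WellInside ρ a (b ⊓ c) := by
  intro h
  rw [compl_inf, hρ.2.2.2] at h
  exact h.elim hab hac

end ContactRel

namespace IsDeltaIdeal
variable {A : Type*} [BooleanAlgebra A] {ρ : A → A → Prop} {IB : Set A}

lemma inter (hρ : ContactRel ρ) {I J : Set A} (hI : IsDeltaIdeal ρ IB I)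
    (hJ : IsDeltaIdeal ρ IB J) : IsDeltaIdeal ρ IB (I ∩ J) := by
  refine ⟨hI.1.inter hJ.1, fun x hx => hI.2.1 hx.1, fun a ha => ?_⟩
  obtain ⟨b, hbI, hab⟩ := hI.2.2 a ha.1
  obtain ⟨c, hcJ, hac⟩ := hJ.2.2 a ha.2
  exact ⟨b ⊓ c, ⟨hI.1.2.1 b hbI _ inf_le_left, hJ.1.2.1 c hcJ _ inf_le_right⟩,
    hρ.wellInside_inf hab hac⟩

/-- The elements well inside some element of `idealJoin S` form an ideal containing each
`I ∈ S`, hence containing `idealJoin S`. -/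
lemma idealJoin (hρ : ContactRel ρ) (hIB : IsBAIdeal IB) {S : Set (Set A)}
    (hS : ∀ I ∈ S, IsDeltaIdeal ρ IB I) : IsDeltaIdeal ρ IB (idealJoin S) := by
  have hJoin := isBAIdeal_idealJoin S
  have hwell : IsBAIdeal {a | ∃ b ∈ _root_.idealJoin S, WellInside ρ a b} := by
    refine ⟨⟨⊥, ⊥, hJoin.bot_mem, hρ.bot_wellInside ⊥⟩, ?_, ?_⟩
    · rintro a ⟨b, hb, hab⟩ c hca
      exact ⟨b, hb, hρ.wellInside_mono hab hca le_rfl⟩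
    · rintro a ⟨b, hb, hab⟩ c ⟨d, hd, hcd⟩
      exact ⟨b ⊔ d, hJoin.2.2 b hb d hd, hρ.wellInside_sup hab hcd⟩
  have hS_sub : ∀ I ∈ S, I ⊆ {a | ∃ b ∈ _root_.idealJoin S, WellInside ρ a b} :=
    fun I hI a ha =>
      let ⟨b, hb, hab⟩ := (hS I hI).2.2 a ha
      ⟨b, subset_idealJoin hI hb, hab⟩
  exact ⟨hJoin, idealJoin_subset hIB fun I hI => (hS I hI).2.1,
    fun a ha => idealJoin_subset hwell hS_sub ha⟩

end IsDeltaIdeal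

/-- The poset of δ-ideals of an LCA (A, ρ, IB) is a frame: (i) the join (in the
ideal lattice) of any family of δ-ideals is a δ-ideal; (ii) the intersection of
two δ-ideals is a δ-ideal; (iii) binary meets distribute over arbitrary joins. -/
theorem stmt_8 {A : Type*} [BooleanAlgebra A]
    (ρ : A → A → Prop) (IB : Set A) (h : IsLCA ρ IB) :
    (∀ S : Set (Set A), (∀ I ∈ S, IsDeltaIdeal ρ IB I) →
      IsDeltaIdeal ρ IB (idealJoin S)) ∧
    (∀ I J : Set A, IsDeltaIdeal ρ IB I → IsDeltaIdeal ρ IB J →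
      IsDeltaIdeal ρ IB (I ∩ J)) ∧
    (∀ J : Set A, IsDeltaIdeal ρ IB J → ∀ S : Set (Set A),
      (∀ I ∈ S, IsDeltaIdeal ρ IB I) →
      J ∩ idealJoin S = idealJoin {K : Set A | ∃ I ∈ S, K = J ∩ I}) :=
  ⟨fun _ hS => IsDeltaIdeal.idealJoin h.1 h.2.1 hS,
    fun _ _ hI hJ => hI.inter h.1 hJ,
    fun _ hJ _ hS => inter_idealJoin hJ.1 fun I hI => (hS I hI).1⟩
end

section
/- Let (A, ρ, IB) be a local contact algebra, let L be the set of bounded clusters of (A, ρ, IB) with the topology whose closed sets are generated by the sets λ(a) = {σ ∈ L | a ∈ σ}, a ∈ A (equivalently, the topology generated by the open sets {σ ∈ L | a ∉ σ}). Then the map ι sending a δ-ideal I to ⋃{λ(a) | a ∈ I} is well defined (ι(I) is open in L) and is an order isomorphism from the poset of δ-ideals of (A, ρ, IB) ordered by inclusion onto the poset of open subsets of L ordered by inclusion. -/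
/-- The type of bounded clusters of an LCA (A, ρ, IB). -/
abbrev BddCluster {A : Type*} [BooleanAlgebra A] (ρ : A → A → Prop) (IB : Set A) :=
  {σ : Set A // IsCACluster (AlexExt ρ IB) σ ∧ (σ ∩ IB).Nonempty}

/-- The map ι sending a δ-ideal I to ⋃{λ(a) | a ∈ I}, where
λ(a) = {σ | a ∈ σ}. -/
def iotaMap {A : Type*} [BooleanAlgebra A] (ρ : A → A → Prop) (IB : Set A)
    (I : Set A) : Set (BddCluster ρ IB) :=
  ⋃ a ∈ I, {σ : BddCluster ρ IB | a ∈ σ.1}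

section Aux
variable {B : Type*} [BooleanAlgebra B] {C : B → B → Prop}

lemma CRmono (hC : ContactRel C) {a b a' b' : B} (hab : C a b) (ha : a ≤ a') (hb : b ≤ b') :
    C a' b' := by
  obtain ⟨c1, c2, c3, c4⟩ := hC
  have h1 : C a b' := by
    have := (c4 a b b').mpr (Or.inl hab)
    rwa [sup_eq_right.mpr hb] at this
  have h3 : C b' a' := by
    have := (c4 b' a a').mpr (Or.inl (c3 _ _ h1))
    rwa [sup_eq_right.mpr ha] at this
  exact c3 _ _ h3

lemma CRinf (hC : ContactRel C) {a b : B} (hab : a ⊓ b ≠ ⊥) : C a b :=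
  CRmono hC (hC.1 _ hab) inf_le_left inf_le_right

lemma CRdisj (hC : ContactRel C) {a b : B} (hab : ¬ C a b) : a ⊓ b = ⊥ := by
  by_contra hne; exact hab (CRinf hC hne)

lemma CRle (hC : ContactRel C) {a b : B} (hab : ¬ C a b) : a ≤ bᶜ :=
  le_compl_iff_disjoint_right.mpr (disjoint_iff.mpr (CRdisj hC hab))

-- cluster lemmas
lemma clUp (hC : ContactRel C) {σ : Set B} (hσ : IsCACluster C σ) {x y : B}
    (hx : x ∈ σ) (hxy : x ≤ y) : y ∈ σ :=
  hσ.2.2.2 y (fun b hb => CRmono hC (hσ.2.1 x hx b hb) hxy le_rfl)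

lemma clBot (hC : ContactRel C) {σ : Set B} (hσ : IsCACluster C σ) : ⊥ ∉ σ :=
  fun hb => (hC.2.1 _ _ (hσ.2.1 ⊥ hb ⊥ hb)).1 rfl

lemma clTop (hC : ContactRel C) {σ : Set B} (hσ : IsCACluster C σ) : ⊤ ∈ σ := by
  obtain ⟨x, hx⟩ := hσ.1; exact clUp hC hσ hx le_top

lemma clDich (hC : ContactRel C) {σ : Set B} (hσ : IsCACluster C σ) (x : B) :
    x ∈ σ ∨ xᶜ ∈ σ := by
  have := clTop hC hσ
  exact hσ.2.2.1 x xᶜ (by rwa [sup_compl_eq_top])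

variable {ρ : B → B → Prop} {IB : Set B}

lemma lcaBot (h : IsLCA ρ IB) : (⊥ : B) ∈ IB := by
  obtain ⟨x, hx⟩ := h.2.1.1; exact h.2.1.2.1 x hx ⊥ bot_le

lemma alexContact (h : IsLCA ρ IB) : ContactRel (AlexExt ρ IB) := by
  have hbot := lcaBot h
  obtain ⟨⟨c1, c2, c3, c4⟩, hIB, _⟩ := h
  refine ⟨fun a ha => Or.inl (c1 a ha), ?_, ?_, ?_⟩
  · rintro a b (hab | ⟨ha, hb⟩)
    · exact c2 _ _ hab
    · exact ⟨fun e => ha (e ▸ hbot), fun e => hb (e ▸ hbot)⟩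
  · rintro a b (hab | ⟨ha, hb⟩)
    exacts [Or.inl (c3 _ _ hab), Or.inr ⟨hb, ha⟩]
  · intro a b c
    constructor
    · rintro (hab | ⟨ha, hbc⟩)
      · rcases (c4 a b c).1 hab with h' | h'
        exacts [Or.inl (Or.inl h'), Or.inr (Or.inl h')]
      · by_cases hb : b ∈ IB
        · by_cases hc : c ∈ IB
          · exact absurd (hIB.2.2 b hb c hc) hbc
          · exact Or.inr (Or.inr ⟨ha, hc⟩)
        · exact Or.inl (Or.inr ⟨ha, hb⟩)
    · rintro ((hab | ⟨ha, hb⟩) | (hac | ⟨ha, hc⟩))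
      · exact Or.inl ((c4 a b c).2 (Or.inl hab))
      · exact Or.inr ⟨ha, fun e => hb (hIB.2.1 _ e b le_sup_left)⟩
      · exact Or.inl ((c4 a b c).2 (Or.inr hac))
      · exact Or.inr ⟨ha, fun e => hc (hIB.2.1 _ e c le_sup_right)⟩

lemma alexC5 (h : IsLCA ρ IB) : ∀ a b : B, ¬ AlexExt ρ IB a b →
    ∃ c, ¬ AlexExt ρ IB a c ∧ ¬ AlexExt ρ IB b cᶜ := by
  intro a b hab
  have hnr : ¬ ρ a b := fun e => hab (Or.inl e)
  have hcase : a ∈ IB ∨ b ∈ IB := by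
    by_contra hcon
    push_neg at hcon
    exact hab (Or.inr hcon)
  obtain ⟨hρ, hIB, hBC1, _⟩ := h
  rcases hcase with ha | hb
  · obtain ⟨c', hc'IB, h1, h2⟩ := hBC1 a ha bᶜ (by rwa [compl_compl])
    rw [compl_compl] at h2
    refine ⟨c'ᶜ, ?_, ?_⟩
    · rintro (he | ⟨he, _⟩)
      exacts [h1 he, he ha]
    · rw [compl_compl]
      rintro (he | ⟨_, he⟩)
      exacts [h2 (hρ.2.2.1 _ _ he), he hc'IB]
  · obtain ⟨c', hc'IB, h1, h2⟩ := hBC1 b hb aᶜ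
      (by rw [compl_compl]; exact fun e => hnr (hρ.2.2.1 _ _ e))
    rw [compl_compl] at h2
    refine ⟨c', ?_, ?_⟩
    · rintro (he | ⟨_, he⟩)
      exacts [h2 (hρ.2.2.1 _ _ he), he hc'IB]
    · rintro (he | ⟨he, _⟩)
      exacts [h1 he, he hb]


def IsUltraF {B : Type*} [BooleanAlgebra B] (u : Set B) : Prop :=
  (⊥ : B) ∉ u ∧ (∀ x ∈ u, ∀ y : B, x ≤ y → y ∈ u) ∧ (∀ x ∈ u, ∀ y ∈ u, x ⊓ y ∈ u) ∧
    (∀ x : B, x ∈ u ∨ xᶜ ∈ u)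

lemma exists_ultraF {B : Type*} [BooleanAlgebra B] (F : Set B) (hbot : (⊥ : B) ∉ F)
    (hup : ∀ x ∈ F, ∀ y : B, x ≤ y → y ∈ F) (hmeet : ∀ x ∈ F, ∀ y ∈ F, x ⊓ y ∈ F)
    (hne : F.Nonempty) : ∃ u, F ⊆ u ∧ IsUltraF u := by
  set S : Set (Set B) := {G | F ⊆ G ∧ (⊥ : B) ∉ G ∧ (∀ x ∈ G, ∀ y : B, x ≤ y → y ∈ G) ∧
    (∀ x ∈ G, ∀ y ∈ G, x ⊓ y ∈ G)} with hS
  have hFS : F ∈ S := ⟨Set.Subset.rfl, hbot, hup, hmeet⟩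
  have hchainU : ∀ c ⊆ S, IsChain (· ⊆ ·) c → c.Nonempty →
      ∃ ub ∈ S, ∀ s ∈ c, s ⊆ ub := by
    intro c hcS hchain hcne
    obtain ⟨G0, hG0⟩ := hcne
    refine ⟨⋃₀ c, ⟨(hcS hG0).1.trans (Set.subset_sUnion_of_mem hG0), ?_, ?_, ?_⟩,
      fun s hs => Set.subset_sUnion_of_mem hs⟩
    · rintro ⟨G, hG, hbG⟩
      exact (hcS hG).2.1 hbG
    · rintro a ⟨G, hG, haG⟩ y hay
      exact ⟨G, hG, (hcS hG).2.2.1 a haG y hay⟩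
    · rintro a ⟨G1, hG1, ha⟩ b ⟨G2, hG2, hb⟩
      rcases hchain.total hG1 hG2 with hle | hle
      · exact ⟨G2, hG2, (hcS hG2).2.2.2 a (hle ha) b hb⟩
      · exact ⟨G1, hG1, (hcS hG1).2.2.2 a ha b (hle hb)⟩
  obtain ⟨u, hFu, huS, humax⟩ := zorn_subset_nonempty S hchainU F hFS
  · have htop : (⊤ : B) ∈ u := by
      obtain ⟨x, hx⟩ := hne
      exact huS.2.2.1 x (hFu hx) ⊤ le_top
    refine ⟨u, hFu, huS.2.1, huS.2.2.1, huS.2.2.2, ?_⟩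
    intro x
    by_contra hcon
    push_neg at hcon
    obtain ⟨hx, hxc⟩ := hcon
    set G : Set B := {y | ∃ z ∈ u, z ⊓ x ≤ y} with hG
    have huG : u ⊆ G := fun y hy => ⟨y, hy, inf_le_left⟩
    have hGS : G ∈ S := by
      refine ⟨hFu.trans huG, ?_, ?_, ?_⟩
      · rintro ⟨z, hz, hzb⟩
        have : z ≤ xᶜ := le_compl_iff_disjoint_right.mpr
          (disjoint_iff.mpr (le_bot_iff.mp hzb))
        exact hxc (huS.2.2.1 z hz xᶜ this)
      · rintro a ⟨z, hz, hza⟩ y hay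
        exact ⟨z, hz, hza.trans hay⟩
      · rintro a ⟨z1, hz1, h1⟩ b ⟨z2, hz2, h2⟩
        refine ⟨z1 ⊓ z2, huS.2.2.2 z1 hz1 z2 hz2, le_inf ?_ ?_⟩
        · exact le_trans (inf_le_inf_right x inf_le_left) h1
        · exact le_trans (inf_le_inf_right x inf_le_right) h2
    have : G ⊆ u := humax hGS huG
    exact hx (this ⟨⊤, htop, by simp⟩)

lemma ultraCluster (hC : ContactRel C)
    (hC5 : ∀ a b : B, ¬ C a b → ∃ c, ¬ C a c ∧ ¬ C b cᶜ) {u : Set B} (hu : IsUltraF u) :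
    u ⊆ {x | ∀ y ∈ u, C x y} ∧ IsCACluster C {x | ∀ y ∈ u, C x y} := by
  obtain ⟨hbot, hup, hmeet, hult⟩ := hu
  have hsub : u ⊆ {x | ∀ y ∈ u, C x y} := by
    intro x hx y hy
    refine CRinf hC fun e => hbot ?_
    exact e ▸ hmeet x hx y hy
  refine ⟨hsub, ?_, ?_, ?_, ?_⟩
  · have htop : (⊤ : B) ∈ u := by
      rcases hult ⊤ with h | h
      · exact h
      · exact absurd h (by simpa using hbot)
    exact ⟨⊤, hsub htop⟩
  · intro x1 hx1 x2 hx2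
    by_contra hcon
    obtain ⟨c, h1, h2⟩ := hC5 x1 x2 hcon
    rcases hult c with hc | hc
    · exact h1 (hx1 c hc)
    · exact h2 (hx2 cᶜ hc)
  · intro x y hxy
    by_contra hcon
    push_neg at hcon
    obtain ⟨hx, hy⟩ := hcon
    simp only [Set.mem_setOf_eq, not_forall] at hx hy
    obtain ⟨z1, hz1, hnx⟩ := hx
    obtain ⟨z2, hz2, hny⟩ := hy
    have hz : z1 ⊓ z2 ∈ u := hmeet z1 hz1 z2 hz2
    have := hxy (z1 ⊓ z2) hz
    have := (hC.2.2.2 (z1 ⊓ z2) x y).1 (hC.2.2.1 _ _ this)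
    rcases this with h' | h'
    · exact hnx (CRmono hC (hC.2.2.1 _ _ h') le_rfl inf_le_left)
    · exact hny (CRmono hC (hC.2.2.1 _ _ h') le_rfl inf_le_right)
  · intro x hx y hy
    exact hx y (hsub hy)

-- if a ≪ρ b and b ∈ IB then a ≤ b and a ∈ IB
lemma lcaLe (h : IsLCA ρ IB) {a b : B} (hab : ¬ ρ a bᶜ) : a ≤ b := by
  have := CRle h.1 hab
  rwa [compl_compl] at this

lemma keyLemma (h : IsLCA ρ IB) {σ : Set B} (hσ : IsCACluster (AlexExt ρ IB) σ)
    (hbdd : (σ ∩ IB).Nonempty) {d : B} (hd : d ∉ σ) :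
    ∃ a ∈ σ, ∃ b ∈ IB, ¬ ρ a bᶜ ∧ ¬ ρ b d := by
  have hCA := alexContact h
  have hρ := h.1
  have hBC1 := h.2.2.1
  -- step 1: get e ∈ σ with ¬ AlexExt d e
  have hK3 : ¬ ∀ b ∈ σ, AlexExt ρ IB d b := fun hc => hd (hσ.2.2.2 d hc)
  push_neg at hK3
  obtain ⟨e, heσ, hde⟩ := hK3
  have hnρde : ¬ ρ d e := fun e' => hde (Or.inl e')
  have hcase : d ∈ IB ∨ e ∈ IB := by
    by_contra hcon; push_neg at hcon; exact hde (Or.inr hcon)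
  -- step 2: get e' ∈ σ ∩ IB with ¬ ρ e' d
  have step2 : ∃ e' ∈ σ, e' ∈ IB ∧ ¬ ρ e' d := by
    by_cases heIB : e ∈ IB
    · exact ⟨e, heσ, heIB, fun e' => hnρde (hρ.2.2.1 _ _ e')⟩
    · have hdIB : d ∈ IB := hcase.resolve_right heIB
      obtain ⟨b', hb'IB, h1, h2⟩ := hBC1 d hdIB eᶜ (by rwa [compl_compl])
      rw [compl_compl] at h2
      obtain ⟨m, hmIB, h3, h4⟩ := hBC1 d hdIB b' h1
      obtain ⟨s, hsσ, hsIB⟩ := hbdd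
      have hsplit : s ⊓ m ⊔ s ⊓ mᶜ ∈ σ := by
        rwa [← inf_sup_left, sup_compl_eq_top, inf_top_eq]
      rcases hσ.2.2.1 _ _ hsplit with hsm | hsm
      · exfalso
        have hsmIB : s ⊓ m ∈ IB := h.2.1.2.1 s hsIB _ inf_le_left
        have : AlexExt ρ IB (s ⊓ m) e := hσ.2.1 _ hsm e heσ
        have hρme : ρ m e := by
          rcases this with h' | h'
          · exact CRmono hρ h' inf_le_right le_rfl
          · exact absurd hsmIB h'.1
        have heb' : e ≤ b'ᶜ := CRle hρ (fun e' => h2 (hρ.2.2.1 _ _ e'))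
        exact h4 (CRmono hρ hρme le_rfl heb')
      · refine ⟨s ⊓ mᶜ, hsm, h.2.1.2.1 s hsIB _ inf_le_left, fun e' => h3 ?_⟩
        exact hρ.2.2.1 _ _ (CRmono hρ e' inf_le_right le_rfl)
  obtain ⟨e', he'σ, he'IB, he'd⟩ := step2
  obtain ⟨b, hbIB, h5, h6⟩ := hBC1 e' he'IB dᶜ (by rwa [compl_compl])
  rw [compl_compl] at h6
  exact ⟨e', he'σ, b, hbIB, h5, h6⟩

end Aux

/-- Let L be the set of bounded clusters of an LCA (A, ρ, IB), topologized by
generating open sets {σ | a ∉ σ} (equivalently, the closed sets are generated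
by the sets λ(a) = {σ | a ∈ σ}).  Then ι(I) = ⋃{λ(a) | a ∈ I} is open for every
δ-ideal I, and ι is an order isomorphism from the poset of δ-ideals (ordered by
inclusion) onto the poset of open subsets of L (ordered by inclusion). -/
theorem stmt_9 {A : Type*} [BooleanAlgebra A]
    (ρ : A → A → Prop) (IB : Set A) (h : IsLCA ρ IB)
    (t : TopologicalSpace (BddCluster ρ IB))
    (ht : t = TopologicalSpace.generateFrom
      {U : Set (BddCluster ρ IB) | ∃ a : A, U = {σ : BddCluster ρ IB | a ∉ σ.1}}) :
    (∀ I : Set A, IsDeltaIdeal ρ IB I → @IsOpen _ t (iotaMap ρ IB I)) ∧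
    (∀ I J : Set A, IsDeltaIdeal ρ IB I → IsDeltaIdeal ρ IB J →
      (I ⊆ J ↔ iotaMap ρ IB I ⊆ iotaMap ρ IB J)) ∧
    (∀ U : Set (BddCluster ρ IB), @IsOpen _ t U →
      ∃ I : Set A, IsDeltaIdeal ρ IB I ∧ iotaMap ρ IB I = U) := by
  subst ht
  set S := {U : Set (BddCluster ρ IB) | ∃ a : A, U = {σ : BddCluster ρ IB | a ∉ σ.1}}
    with hSdef
  have hCA : ContactRel (AlexExt ρ IB) := alexContact h
  have hC5 := alexC5 h
  have hρ := h.1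
  have hmem : ∀ (I : Set A) (σ : BddCluster ρ IB),
      σ ∈ iotaMap ρ IB I ↔ ∃ a ∈ I, a ∈ σ.1 := by
    intro I σ; simp [iotaMap]
  have lamsub : ∀ (a b : A), a ∈ IB → ¬ ρ a bᶜ →
      ∀ σ : BddCluster ρ IB, a ∈ σ.1 → b ∈ σ.1 := by
    intro a b haIB hab σ haσ
    have hbc : bᶜ ∉ σ.1 := by
      intro hbcσ
      rcases σ.2.1.2.1 a haσ bᶜ hbcσ with h' | h'
      exacts [hab h', h'.1 haIB]
    exact (clDich hCA σ.2.1 b).resolve_right hbc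
  have openChar : ∀ U : Set (BddCluster ρ IB), TopologicalSpace.GenerateOpen S U →
      ∀ σ : BddCluster ρ IB, σ ∈ U → ∃ d : A, d ∉ σ.1 ∧
        ∀ τ : BddCluster ρ IB, d ∉ τ.1 → τ ∈ U := by
    intro U hU
    induction hU with
    | basic V hV =>
        obtain ⟨a, rfl⟩ := hV
        exact fun σ hσ => ⟨a, hσ, fun τ hτ => hτ⟩
    | univ => exact fun σ _ => ⟨⊥, clBot hCA σ.2.1, fun τ _ => trivial⟩
    | inter U V hU hV ihU ihV =>
        rintro σ ⟨hσU, hσV⟩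
        obtain ⟨d1, hd1, hU1⟩ := ihU σ hσU
        obtain ⟨d2, hd2, hU2⟩ := ihV σ hσV
        refine ⟨d1 ⊔ d2, ?_, ?_⟩
        · intro hd
          rcases σ.2.1.2.2.1 d1 d2 hd with h' | h'
          exacts [hd1 h', hd2 h']
        · intro τ hτ
          exact ⟨hU1 τ (fun e => hτ (clUp hCA τ.2.1 e le_sup_left)),
                 hU2 τ (fun e => hτ (clUp hCA τ.2.1 e le_sup_right))⟩
    | sUnion K hK ih =>
        rintro σ ⟨s, hs, hσs⟩
        obtain ⟨d, hd, hsub⟩ := ih s hs σ hσs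
        exact ⟨d, hd, fun τ hτ => ⟨s, hs, hsub τ hτ⟩⟩
  refine ⟨?_, ?_, ?_⟩
  · -- Part 1: ι(I) is open
    intro I hI
    have heq : iotaMap ρ IB I = ⋃ b ∈ I, {σ : BddCluster ρ IB | bᶜ ∉ σ.1} := by
      ext σ
      simp only [iotaMap, Set.mem_iUnion, Set.mem_setOf_eq]
      constructor
      · rintro ⟨a, haI, haσ⟩
        obtain ⟨b, hbI, hab⟩ := hI.2.2 a haI
        refine ⟨b, hbI, fun hbcσ => ?_⟩
        rcases σ.2.1.2.1 a haσ bᶜ hbcσ with h' | h'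
        exacts [hab h', h'.1 (hI.2.1 haI)]
      · rintro ⟨b, hbI, hb⟩
        exact ⟨b, hbI, (clDich hCA σ.2.1 b).resolve_right hb⟩
    rw [heq, ← Set.sUnion_image]
    show TopologicalSpace.GenerateOpen S _
    apply TopologicalSpace.GenerateOpen.sUnion
    rintro _ ⟨b, hb, rfl⟩
    exact TopologicalSpace.GenerateOpen.basic _ ⟨bᶜ, rfl⟩
  · -- Part 2: order embedding
    intro I J hI hJ
    constructor
    · intro hIJ σ hσ
      rw [hmem] at hσ ⊢
      obtain ⟨a, haI, haσ⟩ := hσ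
      exact ⟨a, hIJ haI, haσ⟩
    · intro hsub a haI
      by_cases haJ : a ∈ J
      · exact haJ
      exfalso
      have hbotJ : (⊥ : A) ∈ J := by
        obtain ⟨x, hx⟩ := hJ.1.1; exact hJ.1.2.1 x hx ⊥ bot_le
      set F : Set A := {x | ∃ c ∈ J, a ⊓ cᶜ ≤ x} with hF
      have hFbot : (⊥ : A) ∉ F := by
        rintro ⟨c, hcJ, hc⟩
        have hd : a \ c = ⊥ := by rwa [sdiff_eq, ← le_bot_iff]
        exact haJ (hJ.1.2.1 c hcJ a (sdiff_eq_bot_iff.mp hd))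
      have hFup : ∀ x ∈ F, ∀ y : A, x ≤ y → y ∈ F := by
        rintro x ⟨c, hcJ, hcx⟩ y hxy
        exact ⟨c, hcJ, hcx.trans hxy⟩
      have hFmeet : ∀ x ∈ F, ∀ y ∈ F, x ⊓ y ∈ F := by
        rintro x ⟨c1, hc1, h1⟩ y ⟨c2, hc2, h2⟩
        refine ⟨c1 ⊔ c2, hJ.1.2.2 c1 hc1 c2 hc2, ?_⟩
        rw [compl_sup]
        exact le_inf (le_trans (inf_le_inf_left a inf_le_left) h1)
          (le_trans (inf_le_inf_left a inf_le_right) h2)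
      have hFne : F.Nonempty := ⟨a, ⊥, hbotJ, by simp⟩
      obtain ⟨u, hFu, hu⟩ := exists_ultraF F hFbot hFup hFmeet hFne
      obtain ⟨husub, hucl⟩ := ultraCluster hCA hC5 hu
      have hau : a ∈ u := hFu ⟨⊥, hbotJ, by simp⟩
      have haσ0 : a ∈ {x | ∀ y ∈ u, AlexExt ρ IB x y} := husub hau
      set Sig0 : BddCluster ρ IB := ⟨{x | ∀ y ∈ u, AlexExt ρ IB x y}, hucl,
        ⟨a, haσ0, hI.2.1 haI⟩⟩ with hSig0
      have hSI : Sig0 ∈ iotaMap ρ IB I := (hmem I Sig0).mpr ⟨a, haI, haσ0⟩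
      have hSJ := hsub hSI
      rw [hmem] at hSJ
      obtain ⟨c, hcJ, hcσ0⟩ := hSJ
      obtain ⟨c', hc'J, hcc'⟩ := hJ.2.2 c hcJ
      have hc'u : c'ᶜ ∈ u := hFu ⟨c', hc'J, inf_le_right⟩
      rcases hcσ0 c'ᶜ hc'u with h' | h'
      exacts [hcc' h', h'.1 (hJ.2.1 hcJ)]
  · -- Part 3: surjectivity
    intro U hU
    set I : Set A := {a : A | ∃ b ∈ IB, ¬ ρ a bᶜ ∧
      ∀ τ : BddCluster ρ IB, b ∈ τ.1 → τ ∈ U} with hIdef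
    have hIIB : I ⊆ IB := by
      rintro a ⟨b, hbIB, hab, _⟩
      exact h.2.1.2.1 b hbIB a (lcaLe h hab)
    refine ⟨I, ⟨⟨⟨⊥, ?_⟩, ?_, ?_⟩, hIIB, ?_⟩, ?_⟩
    · exact ⟨⊥, lcaBot h, fun e => (hρ.2.1 _ _ e).1 rfl,
        fun τ hbτ => absurd hbτ (clBot hCA τ.2.1)⟩
    · rintro a ⟨b, hbIB, hab, hlam⟩ a' ha'
      exact ⟨b, hbIB, fun e => hab (CRmono hρ e ha' le_rfl), hlam⟩
    · rintro a1 ⟨b1, hb1, h1, hl1⟩ a2 ⟨b2, hb2, h2, hl2⟩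
      refine ⟨b1 ⊔ b2, h.2.1.2.2 b1 hb1 b2 hb2, fun e => ?_, fun τ hτ => ?_⟩
      · rcases (hρ.2.2.2 _ _ _).1 (hρ.2.2.1 _ _ e) with h' | h'
        · exact h1 (CRmono hρ (hρ.2.2.1 _ _ h') le_rfl (compl_le_compl le_sup_left))
        · exact h2 (CRmono hρ (hρ.2.2.1 _ _ h') le_rfl (compl_le_compl le_sup_right))
      · rcases τ.2.1.2.2.1 b1 b2 hτ with h' | h'
        exacts [hl1 τ h', hl2 τ h']
    · rintro a ⟨b, hbIB, hab, hlam⟩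
      have haIB : a ∈ IB := h.2.1.2.1 b hbIB a (lcaLe h hab)
      obtain ⟨b'', hb''IB, h1, h2⟩ := h.2.2.1 a haIB b hab
      exact ⟨b'', ⟨b, hbIB, h2, hlam⟩, h1⟩
    · apply Set.Subset.antisymm
      · intro σ hσ
        rw [hmem] at hσ
        obtain ⟨a, ⟨b, hbIB, hab, hlam⟩, haσ⟩ := hσ
        have haIB : a ∈ IB := h.2.1.2.1 b hbIB a (lcaLe h hab)
        exact hlam σ (lamsub a b haIB hab σ haσ)
      · intro σ hσU
        obtain ⟨d, hdσ, hdsub⟩ := openChar U hU σ hσU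
        obtain ⟨a, haσ, b, hbIB, hab, hbd⟩ := keyLemma h σ.2.1 σ.2.2 hdσ
        refine (hmem I σ).mpr ⟨a, ⟨b, hbIB, hab, fun τ hbτ => ?_⟩, haσ⟩
        refine hdsub τ fun hdτ => ?_
        rcases τ.2.1.2.1 b hbτ d hdτ with h' | h'
        exacts [hbd h', h'.1 hbIB]
end

section
/- Let (A, ρ, IB) be a complete local contact algebra (an LCA whose underlying Boolean algebra is complete). Then for every a ∈ A, a = ⨆ {b ∈ IB | b ≪ρ a}. -/
/-- In a complete local contact algebra (A, ρ, IB), every element a satisfies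
a = ⨆ {b ∈ IB | b ≪ρ a}. -/
theorem stmt_10 {A : Type*} [CompleteBooleanAlgebra A]
    (ρ : A → A → Prop) (IB : Set A) (h : IsLCA ρ IB) :
    ∀ a : A, a = sSup {b : A | b ∈ IB ∧ ¬ ρ b aᶜ} := by
  obtain ⟨⟨hC1, hC2, hC3, hC4⟩, _, _, _, hBC3⟩ := h
  -- monotonicity of ρ in the second argument
  have monoR : ∀ x y z : A, ρ x y → y ≤ z → ρ x z := by
    intro x y z hxy hyz
    have : ρ x (y ⊔ z) := (hC4 x y z).mpr (Or.inl hxy)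
    rwa [sup_eq_right.mpr hyz] at this
  have monoL : ∀ x y z : A, ρ x z → x ≤ y → ρ y z := fun x y z hxz hxy =>
    hC3 _ _ (monoR z x y (hC3 _ _ hxz) hxy)
  -- ¬ ρ b cᶜ → b ≤ c
  have hle : ∀ b c : A, ¬ ρ b cᶜ → b ≤ c := by
    intro b c hnb
    by_contra hbc
    have hne : b ⊓ cᶜ ≠ ⊥ := by
      intro hbot
      exact hbc (sdiff_eq_bot_iff.mp (by rw [sdiff_eq]; exact hbot))
    exact hnb (monoL _ _ _ (monoR _ _ _ (hC1 _ hne) inf_le_right) inf_le_left)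
  intro a
  apply le_antisymm
  · -- a ≤ sSup
    by_contra hna
    set c := a ⊓ (sSup {b : A | b ∈ IB ∧ ¬ ρ b aᶜ})ᶜ with hc
    have hcne : c ≠ ⊥ := by
      intro hbot
      exact hna (sdiff_eq_bot_iff.mp (by rw [sdiff_eq, ← hc]; exact hbot))
    obtain ⟨b, hbIB, hbne, hbρ⟩ := hBC3 c hcne
    have hbc : b ≤ c := hle _ _ hbρ
    have hba : ¬ ρ b aᶜ := fun hr => hbρ (monoR _ _ _ hr (compl_le_compl inf_le_left))
    have hmem : b ∈ {b : A | b ∈ IB ∧ ¬ ρ b aᶜ} := ⟨hbIB, hba⟩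
    have : b ≤ sSup {b : A | b ∈ IB ∧ ¬ ρ b aᶜ} := le_sSup hmem
    have : b ≤ ⊥ := le_trans (le_inf (le_trans hbc inf_le_right) this) (by simp)
    exact hbne (le_bot_iff.mp this)
  · exact sSup_le fun b hb => hle b a hb.2
end

section
/- Let (A, ρ, IB) and (B, η, IB′) be local contact algebras and φ : A → B a function satisfying (DLC1), (DLC2) and (DLC3). Then φ satisfies (LC3): if a₁, a₂ ∈ IB, b₁, b₂ ∈ A, a₁ ≪ρ b₁ and a₂ ≪ρ b₂, then φ(a₁ ∨ a₂) ≪η φ(b₁) ∨ φ(b₂). -/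
/-- If φ : A → B between local contact algebras satisfies (DLC1)-(DLC3), then φ
satisfies (LC3): a₁, a₂ ∈ IB, a₁ ≪ρ b₁ and a₂ ≪ρ b₂ imply
φ(a₁ ⊔ a₂) ≪η φ(b₁) ⊔ φ(b₂). -/
theorem stmt_11 {A : Type*} {B : Type*} [BooleanAlgebra A] [BooleanAlgebra B]
    (ρ : A → A → Prop) (IB : Set A) (η : B → B → Prop) (IB' : Set B)
    (hA : IsLCA ρ IB) (hB : IsLCA η IB') (φ : A → B)
    (dlc1 : φ ⊥ = ⊥)
    (dlc2 : ∀ a b : A, φ (a ⊓ b) = φ a ⊓ φ b)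
    (dlc3 : ∀ a ∈ IB, ∀ b : A, ¬ ρ a bᶜ → ¬ η (φ aᶜ)ᶜ (φ b)ᶜ) :
    ∀ a₁ ∈ IB, ∀ a₂ ∈ IB, ∀ b₁ b₂ : A, ¬ ρ a₁ b₁ᶜ → ¬ ρ a₂ b₂ᶜ →
      ¬ η (φ (a₁ ⊔ a₂)) (φ b₁ ⊔ φ b₂)ᶜ := by
  intro a₁ ha₁ a₂ ha₂ b₁ b₂ h1 h2 hcon
  obtain ⟨⟨_, _, hsym, hC4⟩, _⟩ := hB
  -- monotonicity of η in each argument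
  have monoR : ∀ x y y' : B, y ≤ y' → η x y → η x y' := by
    intro x y y' hy hxy
    have : η x (y ⊔ y') := (hC4 x y y').mpr (Or.inl hxy)
    rwa [sup_eq_right.mpr hy] at this
  have monoL : ∀ x x' y : B, x ≤ x' → η x y → η x' y := fun x x' y hx hxy =>
    hsym _ _ (monoR y x x' hx (hsym _ _ hxy))
  -- φ(a₁ ⊔ a₂) ≤ (φ a₁ᶜ)ᶜ ⊔ (φ a₂ᶜ)ᶜ
  have key : φ (a₁ ⊔ a₂) ≤ (φ a₁ᶜ)ᶜ ⊔ (φ a₂ᶜ)ᶜ := by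
    rw [← compl_inf, ← dlc2]
    have : φ (a₁ ⊔ a₂) ⊓ φ (a₁ᶜ ⊓ a₂ᶜ) = ⊥ := by
      rw [← dlc2, ← compl_sup, inf_compl_eq_bot, dlc1]
    exact le_compl_iff_disjoint_right.mpr (disjoint_iff.mpr this)
  have hcon' : η ((φ a₁ᶜ)ᶜ ⊔ (φ a₂ᶜ)ᶜ) (φ b₁ ⊔ φ b₂)ᶜ :=
    monoL _ _ _ key hcon
  have := (hC4 _ _ _).mp (hsym _ _ hcon')
  rcases this with h | h
  · exact dlc3 a₁ ha₁ b₁ h1 (monoR _ _ _ (compl_le_compl le_sup_left) (hsym _ _ h))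
  · exact dlc3 a₂ ha₂ b₂ h2 (monoR _ _ _ (compl_le_compl le_sup_right) (hsym _ _ h))
end

section
/- Let (A, ρ, IB) and (B, η, IB′) be complete local contact algebras and ψ : A → B a function satisfying (DLC2) and (DLC4). Then for every a ∈ A, ⨆{ψ(b) | b ∈ IB, b ≪ρ a} = ⨆{ψ(b) | b ∈ A, b ≪_{Cρ} a}, where Cρ is the Alexandroff extension of ρ and b ≪_{Cρ} a means ¬(b Cρ a*). -/
/-! Bounded elements are dense in `B` by (BC3), so for `b ≪_{Cρ} a` the element `ψ b` is the
join of the bounded `c ≤ ψ b`. By (DLC4) each such `c` lies below some `ψ a'` with `a'` bounded,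
hence by (DLC2) below `ψ (b ⊓ a')`, and `b ⊓ a'` is bounded and still `≪ρ a`. The reverse
inequality holds because `b ∈ IB, b ≪ρ a` implies `b ≪_{Cρ} a`. -/

namespace ContactRel

variable {X : Type*} [BooleanAlgebra X] {C : X → X → Prop}

theorem mono_s12 (hC : ContactRel C) {x y x' y' : X} (h : C x y) (hx : x ≤ x') (hy : y ≤ y') :
    C x' y' := by
  obtain ⟨-, -, symm, sup_iff⟩ := hC
  have hxy' : C x y' := by
    simpa only [sup_eq_right.mpr hy] using (sup_iff x y y').mpr (Or.inl h)
  have hy'x' : C y' x' := by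
    simpa only [sup_eq_right.mpr hx] using (sup_iff y' x x').mpr (Or.inl (symm _ _ hxy'))
  exact symm _ _ hy'x'

theorem le_of_not_compl (hC : ContactRel C) {x y : X} (h : ¬ C x yᶜ) : x ≤ y := by
  by_contra hxy
  have hne : x ⊓ yᶜ ≠ ⊥ := by rwa [← sdiff_eq, ne_eq, sdiff_eq_bot_iff]
  exact h (hC.mono_s12 (hC.1 _ hne) inf_le_left inf_le_right)

end ContactRel

theorem IsLCA.exists_mem_ne_bot_le {X : Type*} [BooleanAlgebra X] {ρ : X → X → Prop}
    {IB : Set X} (hL : IsLCA ρ IB) {x : X} (hx : x ≠ ⊥) : ∃ c ∈ IB, c ≠ ⊥ ∧ c ≤ x := by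
  obtain ⟨c, hcI, hc, hcx⟩ := hL.2.2.2.2 x hx
  exact ⟨c, hcI, hc, hL.1.le_of_not_compl hcx⟩

theorem le_sSup_mem_le_of_dense {X : Type*} [CompleteBooleanAlgebra X] {I : Set X}
    (hI : ∀ x : X, x ≠ ⊥ → ∃ c ∈ I, c ≠ ⊥ ∧ c ≤ x) (x : X) :
    x ≤ sSup {c | c ∈ I ∧ c ≤ x} := by
  set s := sSup {c | c ∈ I ∧ c ≤ x}
  by_contra hxs
  obtain ⟨c, hcI, hc, hcx⟩ := hI (x \ s) (by rwa [ne_eq, sdiff_eq_bot_iff])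
  have hcs : c ≤ s := le_sSup ⟨hcI, hcx.trans sdiff_le⟩
  exact hc ((disjoint_sdiff_self_left.mono_left hcx).eq_bot_of_le hcs)

theorem not_alexExt_of_mem_of_not {X : Type*} [BooleanAlgebra X] {ρ : X → X → Prop}
    {IB : Set X} {a b : X} (ha : a ∈ IB) (hab : ¬ ρ a b) : ¬ AlexExt ρ IB a b := by
  rintro (h | ⟨ha', -⟩)
  exacts [hab h, ha' ha]

theorem le_sSup_image_bounded_wayBelow {A B : Type*}
    [CompleteBooleanAlgebra A] [CompleteBooleanAlgebra B]
    {ρ : A → A → Prop} {IB : Set A} {η : B → B → Prop} {IB' : Set B}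
    (hA : IsLCA ρ IB) (hB : IsLCA η IB') {ψ : A → B}
    (dlc2 : ∀ a b : A, ψ (a ⊓ b) = ψ a ⊓ ψ b)
    (dlc4 : ∀ b ∈ IB', ∃ a ∈ IB, b ≤ ψ a) {a b : A} (hba : ¬ ρ b aᶜ) :
    ψ b ≤ sSup (ψ '' {b : A | b ∈ IB ∧ ¬ ρ b aᶜ}) := by
  refine (le_sSup_mem_le_of_dense (fun _ => hB.exists_mem_ne_bot_le) (ψ b)).trans
    (sSup_le ?_)
  rintro c ⟨hcI, hcb⟩
  obtain ⟨a', ha'I, hca'⟩ := dlc4 c hcI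
  have hmem : b ⊓ a' ∈ {b : A | b ∈ IB ∧ ¬ ρ b aᶜ} :=
    ⟨hA.2.1.2.1 a' ha'I _ inf_le_right, fun h => hba (hA.1.mono_s12 h inf_le_left le_rfl)⟩
  calc c ≤ ψ b ⊓ ψ a' := le_inf hcb hca'
    _ = ψ (b ⊓ a') := (dlc2 b a').symm
    _ ≤ _ := le_sSup (Set.mem_image_of_mem ψ hmem)

/-- For complete LCAs (A, ρ, IB), (B, η, IB') and ψ : A → B satisfying (DLC2)
and (DLC4), for every a ∈ A one has
⨆{ψ(b) | b ∈ IB, b ≪ρ a} = ⨆{ψ(b) | b ≪_{Cρ} a}, where Cρ is the Alexandroff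
extension of ρ. -/
theorem stmt_12 {A : Type*} {B : Type*}
    [CompleteBooleanAlgebra A] [CompleteBooleanAlgebra B]
    (ρ : A → A → Prop) (IB : Set A) (η : B → B → Prop) (IB' : Set B)
    (hA : IsLCA ρ IB) (hB : IsLCA η IB') (ψ : A → B)
    (dlc2 : ∀ a b : A, ψ (a ⊓ b) = ψ a ⊓ ψ b)
    (dlc4 : ∀ b ∈ IB', ∃ a ∈ IB, b ≤ ψ a) :
    ∀ a : A, sSup (ψ '' {b : A | b ∈ IB ∧ ¬ ρ b aᶜ}) =
      sSup (ψ '' {b : A | ¬ AlexExt ρ IB b aᶜ}) := by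
  intro a
  apply le_antisymm
  · exact sSup_le_sSup (Set.image_mono fun b hb => not_alexExt_of_mem_of_not hb.1 hb.2)
  · refine sSup_le ?_
    rintro _ ⟨b, hb, rfl⟩
    exact le_sSup_image_bounded_wayBelow hA hB dlc2 dlc4 fun h => hb (Or.inl h)
end

section
/- Let (A, ρ, IB) and (B, η, IB′) be complete local contact algebras and φ : A → B a function satisfying (DLC1)–(DLC5). Then φ satisfies the stronger conditions (DLC3S): for all a, b ∈ A, a ≪ρ b implies (φ(a*))* ≪η φ(b); and (LC3S): for all a₁, a₂, b₁, b₂ ∈ A with a₁ ≪ρ b₁ and a₂ ≪ρ b₂, φ(a₁ ∨ a₂) ≪η φ(b₁) ∨ φ(b₂). -/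
/-- If φ : A → B between complete LCAs satisfies (DLC1)-(DLC5), then it also
satisfies (DLC3S) and (LC3S). -/
theorem stmt_13 {A : Type*} {B : Type*}
    [CompleteBooleanAlgebra A] [CompleteBooleanAlgebra B]
    (ρ : A → A → Prop) (IB : Set A) (η : B → B → Prop) (IB' : Set B)
    (hA : IsLCA ρ IB) (hB : IsLCA η IB') (φ : A → B)
    (dlc1 : φ ⊥ = ⊥)
    (dlc2 : ∀ a b : A, φ (a ⊓ b) = φ a ⊓ φ b)
    (dlc3 : ∀ a ∈ IB, ∀ b : A, ¬ ρ a bᶜ → ¬ η (φ aᶜ)ᶜ (φ b)ᶜ)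
    (dlc4 : ∀ b ∈ IB', ∃ a ∈ IB, b ≤ φ a)
    (dlc5 : ∀ a : A, φ a = sSup (φ '' {b : A | b ∈ IB ∧ ¬ ρ b aᶜ})) :
    (∀ a b : A, ¬ ρ a bᶜ → ¬ η (φ aᶜ)ᶜ (φ b)ᶜ) ∧
    (∀ a₁ a₂ b₁ b₂ : A, ¬ ρ a₁ b₁ᶜ → ¬ ρ a₂ b₂ᶜ →
      ¬ η (φ (a₁ ⊔ a₂)) (φ b₁ ⊔ φ b₂)ᶜ) := by

  obtain ⟨⟨hC1A, hC2A, hC3A, hC4A⟩, hIdA, hBC1A, hBC2A, hBC3A⟩ := hA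
  obtain ⟨⟨hC1B, hC2B, hC3B, hC4B⟩, hIdB, hBC1B, hBC2B, hBC3B⟩ := hB
  have hmonoη : ∀ x y y' : B, η x y → y ≤ y' → η x y' := by
    intro x y y' h hle
    have := (hC4B x y y').2 (Or.inl h)
    rwa [sup_eq_right.mpr hle] at this
  have hmonoη1 : ∀ x x' y : B, η x y → x ≤ x' → η x' y := fun x x' y h hle =>
    hC3B _ _ (hmonoη y x x' (hC3B _ _ h) hle)
  have hmonoρ1 : ∀ x x' y : A, ρ x y → x ≤ x' → ρ x' y := by
    intro x x' y h hle
    apply hC3A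
    have := (hC4A y x x').2 (Or.inl (hC3A _ _ h))
    rwa [sup_eq_right.mpr hle] at this
  have φmono : ∀ a b : A, a ≤ b → φ a ≤ φ b := by
    intro a b h
    have h2 := dlc2 a b
    rw [inf_eq_left.mpr h] at h2
    rw [h2]; exact inf_le_right
  have dlc3s : ∀ a b : A, ¬ ρ a bᶜ → ¬ η (φ aᶜ)ᶜ (φ b)ᶜ := by
    intro a b hab hcon
    obtain ⟨c, hcIB, hc⟩ := hBC2B _ _ hcon
    obtain ⟨c', hc'IB, hcc⟩ := hBC2B _ _ (hC3B _ _ hc)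
    obtain ⟨d, hdIB, hdle⟩ := dlc4 c' hc'IB
    have haIB : a ⊓ d ∈ IB := hIdA.2.1 d hdIB (a ⊓ d) inf_le_right
    have hab' : ¬ ρ (a ⊓ d) bᶜ := fun h => hab (hmonoρ1 _ _ _ h inf_le_left)
    apply dlc3 (a ⊓ d) haIB b hab'
    have h1 : c' ⊓ (φ aᶜ)ᶜ ≤ (φ (a ⊓ d)ᶜ)ᶜ := by
      have h2 : φ ((a ⊓ d)ᶜ) ⊓ φ d ≤ φ aᶜ := by
        rw [← dlc2]
        apply φmono
        rw [compl_inf]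
        calc (aᶜ ⊔ dᶜ) ⊓ d ≤ (aᶜ ⊓ d) ⊔ (dᶜ ⊓ d) := by
              rw [inf_sup_right]
            _ ≤ aᶜ := by simp
      have h3 : φ ((a ⊓ d)ᶜ) ⊓ (φ d ⊓ (φ aᶜ)ᶜ) = ⊥ := by
        rw [← inf_assoc]
        exact le_bot_iff.mp (le_trans (inf_le_inf_right _ h2) (by simp))
      calc c' ⊓ (φ aᶜ)ᶜ ≤ φ d ⊓ (φ aᶜ)ᶜ := inf_le_inf_right _ hdle
        _ ≤ (φ (a ⊓ d)ᶜ)ᶜ := le_compl_iff_disjoint_left.mpr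
            (disjoint_iff.mpr h3)
    exact hC3B _ _ (hmonoη _ _ _ (hmonoη1 _ _ _ hcc inf_le_right) h1)
  refine ⟨dlc3s, ?_⟩
  intro a₁ a₂ b₁ b₂ h1 h2 hcon
  have hd1 := dlc3s a₁ b₁ h1
  have hd2 := dlc3s a₂ b₂ h2
  have hle : φ (a₁ ⊔ a₂) ≤ (φ a₁ᶜ)ᶜ ⊔ (φ a₂ᶜ)ᶜ := by
    rw [← compl_inf]
    apply le_compl_iff_disjoint_left.mpr
    apply disjoint_iff.mpr
    rw [inf_comm, ← dlc2, ← dlc2]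
    have h0 : (a₁ ⊔ a₂) ⊓ (a₁ᶜ ⊓ a₂ᶜ) = ⊥ := by
      rw [← compl_sup]; exact inf_compl_eq_bot
    rw [h0, dlc1]
  have hcon2 : η ((φ a₁ᶜ)ᶜ ⊔ (φ a₂ᶜ)ᶜ) ((φ b₁)ᶜ ⊓ (φ b₂)ᶜ) := by
    rw [compl_sup] at hcon
    exact hmonoη1 _ _ _ hcon hle
  rcases (hC4B _ _ _).1 (hC3B _ _ hcon2) with h | h
  · exact hd1 (hC3B _ _ (hmonoη1 _ _ _ h inf_le_left))
  · exact hd2 (hC3B _ _ (hmonoη1 _ _ _ h inf_le_right))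
end

section
/- Let (A, ρ, IB) be a local contact algebra and σ a bounded cluster in (A, ρ, IB). Then: (a) if a ∈ σ then there exists c ∈ IB ∩ σ with c ≤ a; (b) for every a ∈ A, a ∉ σ if and only if there exists b ∈ IB ∩ σ with b ≪ρ a*; (c) σ = {a ∈ A | a ρ d for every d ∈ σ ∩ IB}. -/
/-- Properties of a bounded cluster σ in an LCA (A, ρ, IB):
(a) every a ∈ σ lies above some c ∈ IB ∩ σ;
(b) a ∉ σ iff some b ∈ IB ∩ σ satisfies b ≪ρ a*;
(c) σ = {a | a ρ d for every d ∈ σ ∩ IB}. -/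
theorem stmt_14 {A : Type*} [BooleanAlgebra A]
    (ρ : A → A → Prop) (IB : Set A) (h : IsLCA ρ IB)
    (σ : Set A) (hσ : IsCACluster (AlexExt ρ IB) σ)
    (hbdd : (σ ∩ IB).Nonempty) :
    (∀ a ∈ σ, ∃ c ∈ IB ∩ σ, c ≤ a) ∧
    (∀ a : A, a ∉ σ ↔ ∃ b ∈ IB ∩ σ, ¬ ρ b (aᶜ)ᶜ) ∧
    σ = {a : A | ∀ d ∈ σ ∩ IB, ρ a d} := by
  obtain ⟨⟨hC1, hC2, hC3, hC4⟩, ⟨-, hIdown, hIjoin⟩, hBC1, hBC2, hBC3⟩ := h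
  obtain ⟨hne, hK1, hK2, hK3⟩ := hσ
  obtain ⟨d0, hd0σ, hd0I⟩ := hbdd
  have mono : ∀ a b c : A, ρ a b → b ≤ c → ρ a c := by
    intro a b c hr hle
    have h' : ρ a (b ⊔ c) := (hC4 a b c).mpr (Or.inl hr)
    rwa [sup_eq_right.mpr hle] at h'
  have upward : ∀ s ∈ σ, ∀ t : A, s ≤ t → t ∈ σ := by
    intro s hs t hst
    apply hK3
    intro u hu
    rcases hK1 s hs u hu with hr | ⟨hsI, huI⟩
    · exact Or.inl (hC3 u t (mono u s t (hC3 s u hr) hst))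
    · exact Or.inr ⟨fun htI => hsI (hIdown t htI s hst), huI⟩
  -- a special bounded element b ∈ σ with bᶜ ∉ σ (a "compact neighborhood")
  have hd0bot : ¬ ρ d0 (⊤ : A)ᶜ := by
    rw [compl_top]; intro hr; exact absurd rfl (hC2 d0 ⊥ hr).2
  obtain ⟨b, hbI, hd0b, -⟩ := hBC1 d0 hd0I ⊤ hd0bot
  have hbcns : bᶜ ∉ σ := by
    intro hbc
    rcases hK1 d0 hd0σ bᶜ hbc with hr | ⟨hdI, -⟩
    · exact hd0b hr
    · exact hdI hd0I
  have hbσ : b ∈ σ := by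
    rcases hK2 b bᶜ (by rw [sup_compl_eq_top]; exact upward d0 hd0σ ⊤ le_top) with h' | h'
    · exact h'
    · exact absurd h' hbcns
  have parta : ∀ a ∈ σ, ∃ c ∈ IB ∩ σ, c ≤ a := by
    intro a ha
    have hsplit : a ⊓ b ⊔ a ⊓ bᶜ ∈ σ := by
      rwa [← inf_sup_left, sup_compl_eq_top, inf_top_eq]
    rcases hK2 _ _ hsplit with h' | h'
    · exact ⟨a ⊓ b, ⟨hIdown b hbI _ inf_le_right, h'⟩, inf_le_left⟩
    · exact absurd (upward _ h' bᶜ inf_le_right) hbcns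
  refine ⟨parta, ?_, ?_⟩
  · intro a
    constructor
    · intro hna
      have hex : ∃ c ∈ σ, ¬ AlexExt ρ IB a c := by
        by_contra h'
        push_neg at h'
        exact hna (hK3 a h')
      obtain ⟨c, hcσ, hnc⟩ := hex
      unfold AlexExt at hnc
      push_neg at hnc
      obtain ⟨hnr, hIB⟩ := hnc
      by_cases hcI : c ∈ IB
      · refine ⟨c, ⟨hcI, hcσ⟩, ?_⟩
        rw [compl_compl]
        exact fun hr => hnr (hC3 c a hr)
      · have haI : a ∈ IB := by
          by_contra haI
          exact hcI (hIB haI)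
        have hac : ¬ ρ a (cᶜ)ᶜ := by rwa [compl_compl]
        obtain ⟨b', hb'I, hab', hb'c⟩ := hBC1 a haI cᶜ hac
        rw [compl_compl] at hb'c
        have hd0b'ns : d0 ⊓ b' ∉ σ := by
          intro hmem
          rcases hK1 _ hmem c hcσ with hr | ⟨hdI, -⟩
          · exact hb'c (hC3 c b' (mono c (d0 ⊓ b') b' (hC3 _ c hr) inf_le_right))
          · exact hdI (hIdown d0 hd0I _ inf_le_left)
        have hsplit : d0 ⊓ b' ⊔ d0 ⊓ b'ᶜ ∈ σ := by
          rwa [← inf_sup_left, sup_compl_eq_top, inf_top_eq]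
        rcases hK2 _ _ hsplit with h' | h'
        · exact absurd h' hd0b'ns
        · refine ⟨d0 ⊓ b'ᶜ, ⟨hIdown d0 hd0I _ inf_le_left, h'⟩, ?_⟩
          rw [compl_compl]
          intro hr
          exact hab' (mono a (d0 ⊓ b'ᶜ) b'ᶜ (hC3 _ a hr) inf_le_right)
    · rintro ⟨c, ⟨hcI, hcσ⟩, hnr⟩ haσ
      rw [compl_compl] at hnr
      rcases hK1 a haσ c hcσ with hr | ⟨-, hcI'⟩
      · exact hnr (hC3 a c hr)
      · exact hcI' hcI
  · ext a
    simp only [Set.mem_setOf_eq]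
    constructor
    · intro ha d hd
      rcases hK1 a ha d hd.1 with hr | ⟨-, hdI⟩
      · exact hr
      · exact absurd hd.2 hdI
    · intro ha
      apply hK3
      intro s hs
      obtain ⟨c, ⟨hcI, hcσ⟩, hcs⟩ := parta s hs
      exact Or.inl (mono a c s (ha c ⟨hcσ, hcI⟩) hcs)
end

section
/- Let (A, ρ, IB) be a local contact algebra and σ₁, σ₂ two clusters in (A, ρ, IB) such that σ₁ ∩ IB = σ₂ ∩ IB. Then σ₁ = σ₂. -/
lemma cluster_subset_aux {A : Type*} [BooleanAlgebra A]
    (ρ : A → A → Prop) (IB : Set A)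
    (σ₁ σ₂ : Set A)
    (h₁ : IsCACluster (AlexExt ρ IB) σ₁) (h₂ : IsCACluster (AlexExt ρ IB) σ₂)
    (heq : σ₁ ∩ IB = σ₂ ∩ IB) : σ₁ ⊆ σ₂ := by
  intro a ha
  by_cases haI : a ∈ IB
  · have : a ∈ σ₂ ∩ IB := heq ▸ ⟨ha, haI⟩
    exact this.1
  · apply h₂.2.2.2
    intro b hb
    by_cases hbI : b ∈ IB
    · have hb1 : b ∈ σ₁ := (heq ▸ (⟨hb, hbI⟩ : b ∈ σ₂ ∩ IB) : b ∈ σ₁ ∩ IB).1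
      exact h₁.2.1 a ha b hb1
    · exact Or.inr ⟨haI, hbI⟩

/-- Two clusters in an LCA (A, ρ, IB) that have the same bounded part are
equal. -/
theorem stmt_15 {A : Type*} [BooleanAlgebra A]
    (ρ : A → A → Prop) (IB : Set A) (h : IsLCA ρ IB)
    (σ₁ σ₂ : Set A)
    (h₁ : IsCACluster (AlexExt ρ IB) σ₁) (h₂ : IsCACluster (AlexExt ρ IB) σ₂)
    (heq : σ₁ ∩ IB = σ₂ ∩ IB) :
    σ₁ = σ₂ :=
  Set.Subset.antisymm (cluster_subset_aux ρ IB σ₁ σ₂ h₁ h₂ heq)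
    (cluster_subset_aux ρ IB σ₂ σ₁ h₂ h₁ heq.symm)
end

section
/- Let σ be a bounded cluster in a local contact algebra (A, ρ, IB). Then I = IB \ σ is a prime element of the frame of δ-ideals of (A, ρ, IB); that is, I is a δ-ideal, I ≠ IB, and for all δ-ideals J₁, J₂ with J₁ ∩ J₂ ⊆ I, either J₁ ⊆ I or J₂ ⊆ I. -/
/-- If σ is a bounded cluster in an LCA (A, ρ, IB), then I = IB \ σ is a prime
element of the frame of δ-ideals: I is a δ-ideal, I ≠ IB, and for all δ-ideals
J₁, J₂ with J₁ ∩ J₂ ⊆ I, either J₁ ⊆ I or J₂ ⊆ I. -/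
theorem stmt_16 {A : Type*} [BooleanAlgebra A]
    (ρ : A → A → Prop) (IB : Set A) (h : IsLCA ρ IB)
    (σ : Set A) (hσ : IsCACluster (AlexExt ρ IB) σ)
    (hbdd : (σ ∩ IB).Nonempty) :
    IsDeltaIdeal ρ IB (IB \ σ) ∧
    IB \ σ ≠ IB ∧
    (∀ J₁ J₂ : Set A, IsDeltaIdeal ρ IB J₁ → IsDeltaIdeal ρ IB J₂ →
      J₁ ∩ J₂ ⊆ IB \ σ → J₁ ⊆ IB \ σ ∨ J₂ ⊆ IB \ σ) := by
  obtain ⟨⟨hC1, hC2, hC3, hC4⟩, ⟨hIBne, hIBdown, hIBjoin⟩, hBC1, hBC2, hBC3⟩ := h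
  obtain ⟨hne, hK1, hK2, hK3⟩ := hσ
  have mono2 : ∀ a b b' : A, b ≤ b' → ρ a b → ρ a b' := by
    intro a b b' hbb hr
    have h2 : ρ a (b ⊔ b') := (hC4 a b b').2 (Or.inl hr)
    rwa [sup_eq_right.mpr hbb] at h2
  have mono1 : ∀ a a' b : A, a ≤ a' → ρ a b → ρ a' b := fun a a' b h1 h2 =>
    hC3 _ _ (mono2 b a a' h1 (hC3 _ _ h2))
  have σup : ∀ a ∈ σ, ∀ b, a ≤ b → b ∈ σ := by
    intro a ha b hab
    apply hK3
    intro c hc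
    rcases hK1 a ha c hc with hr | ⟨haI, hcI⟩
    · exact Or.inl (mono1 a b c hab hr)
    · exact Or.inr ⟨fun hb => haI (hIBdown b hb a hab), hcI⟩
  have hbot : (⊥ : A) ∈ IB := by
    obtain ⟨x, hx⟩ := hIBne
    exact hIBdown x hx ⊥ bot_le
  have hbotσ : (⊥ : A) ∉ σ := by
    intro hb
    rcases hK1 ⊥ hb ⊥ hb with hr | ⟨hnI, _⟩
    · exact (hC2 _ _ hr).1 rfl
    · exact hnI hbot
  have hdelta : IsDeltaIdeal ρ IB (IB \ σ) := by
    refine ⟨⟨⟨⊥, hbot, hbotσ⟩, ?_, ?_⟩, fun a ha => ha.1, ?_⟩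
    · rintro a ⟨haI, haσ⟩ b hba
      exact ⟨hIBdown a haI b hba, fun hb => haσ (σup b hb a hba)⟩
    · rintro a ⟨haI, haσ⟩ b ⟨hbI, hbσ⟩
      refine ⟨hIBjoin a haI b hbI, fun hs => ?_⟩
      rcases hK2 a b hs with hh | hh
      · exact haσ hh
      · exact hbσ hh
    · rintro a ⟨haI, haσ⟩
      have hex : ¬ ∀ c ∈ σ, AlexExt ρ IB a c := fun hh => haσ (hK3 a hh)
      push_neg at hex
      obtain ⟨c, hcσ, hnc⟩ := hex
      have hnr : ¬ ρ a cᶜᶜ := by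
        rw [compl_compl]; exact fun hr => hnc (Or.inl hr)
      obtain ⟨b, hbI, hab, hbc⟩ := hBC1 a haI cᶜ hnr
      rw [compl_compl] at hbc
      refine ⟨b, ⟨hbI, fun hbσ => ?_⟩, hab⟩
      rcases hK1 b hbσ c hcσ with hr | ⟨hnI2, _⟩
      · exact hbc hr
      · exact hnI2 hbI
  refine ⟨hdelta, ?_, ?_⟩
  · obtain ⟨x, hxσ, hxI⟩ := hbdd
    intro he
    have hx : x ∈ IB \ σ := by rw [he]; exact hxI
    exact hx.2 hxσ
  · intro J₁ J₂ hJ1 hJ2 hsub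
    by_contra hcon
    push_neg at hcon
    obtain ⟨h1, h2⟩ := hcon
    obtain ⟨a₁, ha1J, ha1n⟩ := Set.not_subset.mp h1
    obtain ⟨a₂, ha2J, ha2n⟩ := Set.not_subset.mp h2
    obtain ⟨hJ1i, hJ1sub, hJ1d⟩ := hJ1
    obtain ⟨hJ2i, hJ2sub, hJ2d⟩ := hJ2
    have ha1IB := hJ1sub ha1J
    have ha2IB := hJ2sub ha2J
    have ha1σ : a₁ ∈ σ := by by_contra hh; exact ha1n ⟨ha1IB, hh⟩
    have ha2σ : a₂ ∈ σ := by by_contra hh; exact ha2n ⟨ha2IB, hh⟩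
    obtain ⟨b₁, hb1J, hab1⟩ := hJ1d a₁ ha1J
    obtain ⟨b₂, hb2J, hab2⟩ := hJ2d a₂ ha2J
    have hmeet : b₁ ⊓ b₂ ∈ J₁ ∩ J₂ :=
      ⟨hJ1i.2.1 b₁ hb1J _ inf_le_left, hJ2i.2.1 b₂ hb2J _ inf_le_right⟩
    have hmσ : b₁ ⊓ b₂ ∉ σ := (hsub hmeet).2
    apply hmσ
    apply hK3
    intro c hcσ
    have hdec : (c ⊓ (b₁ ⊓ b₂)) ⊔ ((c ⊓ b₁ᶜ) ⊔ (c ⊓ b₂ᶜ)) = c := by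
      rw [← inf_sup_left, ← compl_inf, ← inf_sup_left, sup_compl_eq_top, inf_top_eq]
    have hc' : (c ⊓ (b₁ ⊓ b₂)) ⊔ ((c ⊓ b₁ᶜ) ⊔ (c ⊓ b₂ᶜ)) ∈ σ := by
      rw [hdec]; exact hcσ
    rcases hK2 _ _ hc' with hh | hh
    · exact absurd (σup _ hh _ inf_le_right) hmσ
    · rcases hK2 _ _ hh with hh' | hh'
      · rcases hK1 a₁ ha1σ _ hh' with hr | ⟨hnI, _⟩
        · exact absurd (mono2 _ _ _ inf_le_right hr) hab1
        · exact absurd ha1IB hnI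
      · rcases hK1 a₂ ha2σ _ hh' with hr | ⟨hnI, _⟩
        · exact absurd (mono2 _ _ _ inf_le_right hr) hab2
        · exact absurd ha2IB hnI
end

section
/- Let (A, ρ, IB) be a local contact algebra and I a prime element of the frame of δ-ideals of (A, ρ, IB) (i.e. I is a δ-ideal, I ≠ IB, and for all δ-ideals J₁, J₂ with J₁ ∩ J₂ ⊆ I, J₁ ⊆ I or J₂ ⊆ I). Then there exists a unique cluster σ in (A, ρ, IB) such that σ ∩ IB = IB \ I; moreover, σ = {a ∈ A | a ρ b for every b ∈ IB \ I}. -/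
/-- Auxiliary: monotonicity of a contact relation. -/
theorem Stmt17.rho_mono {A : Type*} [BooleanAlgebra A] {ρ : A → A → Prop}
    (hC : ContactRel ρ) {a b a' b' : A} (hab : ρ a b) (h1 : a ≤ a') (h2 : b ≤ b') :
    ρ a' b' := by
  obtain ⟨c1, c2, c3, c4⟩ := hC
  have hb : ρ a b' := by
    have heq : b ⊔ b' = b' := sup_eq_right.mpr h2
    have := (c4 a b b').mpr (Or.inl hab)
    rwa [heq] at this
  have ha : ρ b' a' := by
    have heq : a ⊔ a' = a' := sup_eq_right.mpr h1
    have := (c4 b' a a').mpr (Or.inl (c3 _ _ hb))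
    rwa [heq] at this
  exact c3 _ _ ha

/-- Auxiliary: the δ-ideal of elements of `IB` well inside `x`. -/
def Stmt17.Jset {A : Type*} [BooleanAlgebra A] (ρ : A → A → Prop) (IB : Set A) (x : A) :
    Set A := {c | c ∈ IB ∧ ¬ ρ c xᶜ}

theorem Stmt17.Jset_delta {A : Type*} [BooleanAlgebra A] {ρ : A → A → Prop} {IB : Set A}
    (h : IsLCA ρ IB) (x : A) : IsDeltaIdeal ρ IB (Stmt17.Jset ρ IB x) := by
  obtain ⟨hC, ⟨hIBne, hIBdown, hIBjoin⟩, hBC1, hBC2, hBC3⟩ := h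
  obtain ⟨c1, c2, c3, c4⟩ := id hC
  have botIB : (⊥ : A) ∈ IB := by
    obtain ⟨y, hy⟩ := hIBne; exact hIBdown y hy ⊥ bot_le
  refine ⟨⟨⟨⊥, botIB, fun hr => (c2 _ _ hr).1 rfl⟩, ?_, ?_⟩, fun c hc => hc.1, ?_⟩
  · intro a ha b hle
    exact ⟨hIBdown a ha.1 b hle, fun hr => ha.2 (Stmt17.rho_mono hC hr hle le_rfl)⟩
  · intro a ha b hb
    refine ⟨hIBjoin a ha.1 b hb.1, fun hr => ?_⟩
    rcases (c4 xᶜ a b).mp (c3 _ _ hr) with h' | h'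
    · exact ha.2 (c3 _ _ h')
    · exact hb.2 (c3 _ _ h')
  · intro a ha
    obtain ⟨b, hbIB, hab, hbx⟩ := hBC1 a ha.1 x ha.2
    exact ⟨b, ⟨hbIB, hbx⟩, hab⟩

/-- If I is a prime element of the frame of δ-ideals of an LCA (A, ρ, IB), then
there is a unique cluster σ in (A, ρ, IB) such that σ ∩ IB = IB \ I; moreover,
σ = {a | a ρ b for every b ∈ IB \ I}. -/
theorem stmt_17 {A : Type*} [BooleanAlgebra A]
    (ρ : A → A → Prop) (IB : Set A) (h : IsLCA ρ IB)
    (I : Set A) (hI : IsDeltaIdeal ρ IB I) (hne : I ≠ IB)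
    (hprime : ∀ J₁ J₂ : Set A, IsDeltaIdeal ρ IB J₁ → IsDeltaIdeal ρ IB J₂ →
      J₁ ∩ J₂ ⊆ I → J₁ ⊆ I ∨ J₂ ⊆ I) :
    (∃! σ : Set A, IsCACluster (AlexExt ρ IB) σ ∧ σ ∩ IB = IB \ I) ∧
    (∀ σ : Set A, IsCACluster (AlexExt ρ IB) σ → σ ∩ IB = IB \ I →
      σ = {a : A | ∀ b ∈ IB \ I, ρ a b}) := by
  obtain ⟨hC, ⟨hIBne, hIBdown, hIBjoin⟩, hBC1, hBC2, hBC3⟩ := id h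
  obtain ⟨c1, c2, c3, c4⟩ := id hC
  obtain ⟨⟨hIne, hIdown, hIjoin⟩, hIsub, hIdelta⟩ := id hI
  have botI : (⊥ : A) ∈ I := by
    obtain ⟨y, hy⟩ := hIne; exact hIdown y hy ⊥ bot_le
  -- IB \ I is nonempty
  have Fne : ∃ f, f ∈ IB \ I := by
    have hss : I ⊂ IB := hIsub.ssubset_of_ne hne
    obtain ⟨x, hx1, hx2⟩ := Set.exists_of_ssubset hss
    exact ⟨x, hx1, hx2⟩
  -- dichotomy from primeness
  have dich : ∀ x : A, Stmt17.Jset ρ IB x ⊆ I ∨ Stmt17.Jset ρ IB xᶜ ⊆ I := by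
    intro x
    apply hprime _ _ (Stmt17.Jset_delta h x) (Stmt17.Jset_delta h xᶜ)
    rintro c ⟨⟨hcIB, hc1⟩, ⟨_, hc2⟩⟩
    rw [compl_compl] at hc2
    have hc0 : c = ⊥ := by
      by_contra hc0
      have htop : ρ c (x ⊔ xᶜ) := by
        rw [sup_compl_eq_top]
        exact Stmt17.rho_mono hC (c1 c hc0) le_rfl le_top
      rcases (c4 c x xᶜ).mp htop with h' | h'
      · exact hc2 h'
      · exact hc1 h'
    rw [hc0]; exact botI
  -- key lemma: elements of I are far from some unbounded-in-I element
  have lemL : ∀ b ∈ I, ∃ c ∈ IB \ I, ¬ ρ c b := by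
    intro b hb
    by_contra hcon
    push_neg at hcon
    obtain ⟨b', hb'I, hbb'⟩ := hIdelta b hb
    apply hne
    apply Set.Subset.antisymm hIsub
    intro f hf
    have h1 : f ⊓ b' ∈ I := hIdown b' hb'I _ inf_le_right
    have hf2IB : f ⊓ b'ᶜ ∈ IB := hIBdown f hf _ inf_le_left
    have h2 : f ⊓ b'ᶜ ∈ I := by
      by_contra h2
      have hr : ρ (f ⊓ b'ᶜ) b := hcon (f ⊓ b'ᶜ) ⟨hf2IB, h2⟩
      exact hbb' (Stmt17.rho_mono hC (c3 _ _ hr) le_rfl inf_le_right)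
    have hj : (f ⊓ b') ⊔ (f ⊓ b'ᶜ) ∈ I := hIjoin _ h1 _ h2
    have heq : (f ⊓ b') ⊔ (f ⊓ b'ᶜ) = f := by
      rw [← inf_sup_left, sup_compl_eq_top, inf_top_eq]
    rwa [heq] at hj
  -- any two elements of IB \ I are in contact
  have FsubS : ∀ a ∈ IB \ I, ∀ b ∈ IB \ I, ρ a b := by
    rintro a ⟨haIB, haI⟩ b ⟨hbIB, hbI⟩
    by_contra hab
    have hab' : ¬ ρ a bᶜᶜ := by rwa [compl_compl]
    obtain ⟨d, hdIB, had, hdb⟩ := hBC1 a haIB bᶜ hab'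
    rw [compl_compl] at hdb
    rcases dich d with h1 | h2
    · exact haI (h1 ⟨haIB, had⟩)
    · apply hbI
      apply h2
      refine ⟨hbIB, ?_⟩
      rw [compl_compl]
      exact fun hbd => hdb (c3 _ _ hbd)
  -- the candidate cluster
  set σ : Set A := {a : A | ∀ b ∈ IB \ I, ρ a b} with hσ
  have SIB : ∀ a ∈ σ, a ∈ IB → a ∈ IB \ I := by
    intro a ha haIB
    refine ⟨haIB, fun haI => ?_⟩
    obtain ⟨c, hcF, hc⟩ := lemL a haI
    exact hc (c3 _ _ (ha c hcF))
  have hcap : σ ∩ IB = IB \ I := by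
    apply Set.ext
    intro x
    constructor
    · rintro ⟨hx1, hx2⟩; exact SIB x hx1 hx2
    · intro hx; exact ⟨fun b hb => FsubS x hx b hb, hx.1⟩
  have hcluster : IsCACluster (AlexExt ρ IB) σ := by
    obtain ⟨f, hf⟩ := Fne
    refine ⟨⟨f, fun b hb => FsubS f hf b hb⟩, ?_, ?_, ?_⟩
    · -- K1
      intro a ha b hb
      by_cases haIB : a ∈ IB
      · exact Or.inl (c3 _ _ (hb a (SIB a ha haIB)))
      · by_cases hbIB : b ∈ IB
        · exact Or.inl (ha b (SIB b hb hbIB))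
        · exact Or.inr ⟨haIB, hbIB⟩
    · -- K2
      intro a b hab
      by_contra hcon
      push_neg at hcon
      have ha' : ∃ c ∈ IB \ I, ¬ ρ a c := by
        have := hcon.1
        rw [hσ, Set.mem_setOf_eq] at this
        push_neg at this
        exact this
      have hb' : ∃ c ∈ IB \ I, ¬ ρ b c := by
        have := hcon.2
        rw [hσ, Set.mem_setOf_eq] at this
        push_neg at this
        exact this
      obtain ⟨c₁, hc₁F, hc₁⟩ := ha'
      obtain ⟨c₂, hc₂F, hc₂⟩ := hb'
      have hnot1 : ¬ Stmt17.Jset ρ IB aᶜ ⊆ I := by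
        intro hs
        refine hc₁F.2 (hs ⟨hc₁F.1, ?_⟩)
        rw [compl_compl]
        exact fun hr => hc₁ (c3 _ _ hr)
      have hnot2 : ¬ Stmt17.Jset ρ IB bᶜ ⊆ I := by
        intro hs
        refine hc₂F.2 (hs ⟨hc₂F.1, ?_⟩)
        rw [compl_compl]
        exact fun hr => hc₂ (c3 _ _ hr)
      have hsub : ¬ (Stmt17.Jset ρ IB aᶜ ∩ Stmt17.Jset ρ IB bᶜ ⊆ I) := by
        intro hs
        rcases hprime _ _ (Stmt17.Jset_delta h aᶜ) (Stmt17.Jset_delta h bᶜ) hs with h' | h'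
        · exact hnot1 h'
        · exact hnot2 h'
      obtain ⟨c, hcmem, hcI⟩ := Set.not_subset.mp hsub
      obtain ⟨⟨hcIB, hca⟩, ⟨_, hcb⟩⟩ := hcmem
      rw [compl_compl] at hca hcb
      have : ρ (a ⊔ b) c := hab c ⟨hcIB, hcI⟩
      rcases (c4 c a b).mp (c3 _ _ this) with h' | h'
      · exact hca h'
      · exact hcb h'
    · -- K3
      intro a hA c hcF
      have hcσ : c ∈ σ := fun b hb => FsubS c hcF b hb
      rcases hA c hcσ with h' | ⟨_, hcIB⟩
      · exact h'
      · exact absurd hcF.1 hcIB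
  have huniq : ∀ τ : Set A, IsCACluster (AlexExt ρ IB) τ → τ ∩ IB = IB \ I → τ = σ := by
    rintro τ ⟨τne, τ1, τ2, τ3⟩ hτ
    apply Set.Subset.antisymm
    · intro a ha c hcF
      have hcτ : c ∈ τ := by
        have : c ∈ τ ∩ IB := hτ ▸ hcF
        exact this.1
      rcases τ1 a ha c hcτ with h' | ⟨_, hcIB⟩
      · exact h'
      · exact absurd hcF.1 hcIB
    · intro a ha
      apply τ3
      intro b hbτ
      by_cases hbIB : b ∈ IB
      · have hbF : b ∈ IB \ I := by rw [← hτ]; exact ⟨hbτ, hbIB⟩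
        exact Or.inl (ha b hbF)
      · by_cases haIB : a ∈ IB
        · have haF : a ∈ IB \ I := SIB a ha haIB
          have haτ : a ∈ τ := by
            have : a ∈ τ ∩ IB := by rw [hτ]; exact haF
            exact this.1
          rcases τ1 a haτ b hbτ with h' | ⟨haIB', _⟩
          · exact Or.inl h'
          · exact absurd haIB haIB'
        · exact Or.inr ⟨haIB, hbIB⟩
  exact ⟨⟨σ, ⟨hcluster, hcap⟩, fun τ hτ => huniq τ hτ.1 hτ.2⟩,
    fun τ h1 h2 => huniq τ h1 h2⟩
end

section
/- Let (A, ρ, IB) and (B, η, IB′) be local contact algebras, φ : A → B a function satisfying (DLC1)–(DLC3), and σ′ a cluster in (B, η, IB′). Define S_{σ′} = {a ∈ IB | for all b ∈ A, a ≪ρ b implies φ(b) ∈ σ′} and J_{σ′} = IB \ S_{σ′}. Then J_{σ′} is a δ-ideal of (A, ρ, IB). If moreover σ′ is bounded and φ also satisfies (DLC4), then J_{σ′} is a prime element of the frame of δ-ideals: J_{σ′} ≠ IB and for all δ-ideals J₁, J₂ with J₁ ∩ J₂ ⊆ J_{σ′}, J₁ ⊆ J_{σ′} or J₂ ⊆ J_{σ′}.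 -/
/-- Let φ : A → B between LCAs satisfy (DLC1)-(DLC3) and let σ' be a cluster in
(B, η, IB').  With S = {a ∈ IB | ∀ b, a ≪ρ b → φ(b) ∈ σ'} and J = IB \ S,
the set J is a δ-ideal of (A, ρ, IB); if moreover σ' is bounded and φ also
satisfies (DLC4), then J is a prime element of the frame of δ-ideals. -/
theorem stmt_18 {A : Type*} {B : Type*} [BooleanAlgebra A] [BooleanAlgebra B]
    (ρ : A → A → Prop) (IB : Set A) (η : B → B → Prop) (IB' : Set B)
    (hA : IsLCA ρ IB) (hB : IsLCA η IB') (φ : A → B)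
    (dlc1 : φ ⊥ = ⊥)
    (dlc2 : ∀ a b : A, φ (a ⊓ b) = φ a ⊓ φ b)
    (dlc3 : ∀ a ∈ IB, ∀ b : A, ¬ ρ a bᶜ → ¬ η (φ aᶜ)ᶜ (φ b)ᶜ)
    (σ' : Set B) (hσ' : IsCACluster (AlexExt η IB') σ') :
    IsDeltaIdeal ρ IB (IB \ {a ∈ IB | ∀ b : A, ¬ ρ a bᶜ → φ b ∈ σ'}) ∧
    ((σ' ∩ IB').Nonempty → (∀ b ∈ IB', ∃ a ∈ IB, b ≤ φ a) →
      IB \ {a ∈ IB | ∀ b : A, ¬ ρ a bᶜ → φ b ∈ σ'} ≠ IB ∧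
      (∀ J₁ J₂ : Set A, IsDeltaIdeal ρ IB J₁ → IsDeltaIdeal ρ IB J₂ →
        J₁ ∩ J₂ ⊆ IB \ {a ∈ IB | ∀ b : A, ¬ ρ a bᶜ → φ b ∈ σ'} →
        J₁ ⊆ IB \ {a ∈ IB | ∀ b : A, ¬ ρ a bᶜ → φ b ∈ σ'} ∨
        J₂ ⊆ IB \ {a ∈ IB | ∀ b : A, ¬ ρ a bᶜ → φ b ∈ σ'})) := by
  obtain ⟨⟨C1, C2, C3, C4⟩, ⟨hIBne, hIBdn, hIBjn⟩, hBC1, _hBC2, _hBC3⟩ := hA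
  obtain ⟨⟨D1, D2, D3, D4⟩, ⟨hIB'ne, hIB'dn, _hIB'jn⟩, hEBC1, _hEBC2, _hEBC3⟩ := hB
  obtain ⟨hσne, K1, K2, K3⟩ := hσ'
  -- monotonicity of the contact relations
  have ρmono : ∀ {a a' b b' : A}, a ≤ a' → b ≤ b' → ρ a b → ρ a' b' := by
    intro a a' b b' ha hb h
    have h1 : ρ a b' := by
      have := (C4 a b b').mpr (Or.inl h)
      rwa [sup_eq_right.mpr hb] at this
    have h3 : ρ b' a' := by
      have := (C4 b' a a').mpr (Or.inl (C3 _ _ h1))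
      rwa [sup_eq_right.mpr ha] at this
    exact C3 _ _ h3
  have ηmono : ∀ {a a' b b' : B}, a ≤ a' → b ≤ b' → η a b → η a' b' := by
    intro a a' b b' ha hb h
    have h1 : η a b' := by
      have := (D4 a b b').mpr (Or.inl h)
      rwa [sup_eq_right.mpr hb] at this
    have h3 : η b' a' := by
      have := (D4 b' a a').mpr (Or.inl (D3 _ _ h1))
      rwa [sup_eq_right.mpr ha] at this
    exact D3 _ _ h3
  have hle : ∀ {a b : A}, ¬ ρ a bᶜ → a ≤ b := by
    intro a b h
    by_contra hn
    have hne : a ⊓ bᶜ ≠ ⊥ := by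
      intro he
      exact hn (sdiff_eq_bot_iff.mp (by rw [sdiff_eq]; exact he))
    exact h (ρmono inf_le_left inf_le_right (C1 _ hne))
  have hleη : ∀ {a b : B}, ¬ η a bᶜ → a ≤ b := by
    intro a b h
    by_contra hn
    have hne : a ⊓ bᶜ ≠ ⊥ := by
      intro he
      exact hn (sdiff_eq_bot_iff.mp (by rw [sdiff_eq]; exact he))
    exact h (ηmono inf_le_left inf_le_right (D1 _ hne))
  have φmono : ∀ {a b : A}, a ≤ b → φ a ≤ φ b := by
    intro a b h
    have : φ (a ⊓ b) = φ a := by rw [inf_eq_left.mpr h]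
    rw [← this, dlc2]; exact inf_le_right
  have φcpl : ∀ a : A, φ a ≤ (φ aᶜ)ᶜ := by
    intro a
    have : φ a ⊓ φ aᶜ = ⊥ := by rw [← dlc2, inf_compl_eq_bot, dlc1]
    exact le_compl_iff_disjoint_right.mpr (disjoint_iff.mpr this)
  have botIB : (⊥ : A) ∈ IB := by
    obtain ⟨x, hx⟩ := hIBne
    exact hIBdn x hx ⊥ bot_le
  have botIB' : (⊥ : B) ∈ IB' := by
    obtain ⟨x, hx⟩ := hIB'ne
    exact hIB'dn x hx ⊥ bot_le
  have σup : ∀ {x y : B}, x ∈ σ' → x ≤ y → y ∈ σ' := by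
    intro x y hx hxy
    apply K3
    intro b hb
    rcases K1 x hx b hb with h | h
    · exact Or.inl (ηmono hxy le_rfl h)
    · exact Or.inr ⟨fun hy => h.1 (hIB'dn y hy x hxy), h.2⟩
  have σtop : (⊤ : B) ∈ σ' := by
    obtain ⟨x, hx⟩ := hσne
    exact σup hx le_top
  have σbotn : (⊥ : B) ∉ σ' := by
    intro h
    rcases K1 ⊥ h ⊥ h with h' | h'
    · exact (D2 _ _ h').1 rfl
    · exact h'.1 botIB'
  have σcpl : ∀ {x : B}, x ∉ σ' → xᶜ ∈ σ' := by
    intro x hx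
    rcases K2 x xᶜ (by rw [sup_compl_eq_top]; exact σtop) with h | h
    · exact absurd h hx
    · exact h
  have hsplitB : ∀ x y : B, x = (x ⊓ y) ⊔ (x ⊓ yᶜ) := by
    intro x y
    rw [← inf_sup_left, sup_compl_eq_top, inf_top_eq]
  have hsplitA : ∀ x y : A, x = (x ⊓ y) ⊔ (x ⊓ yᶜ) := by
    intro x y
    rw [← inf_sup_left, sup_compl_eq_top, inf_top_eq]
  set S : Set A := {a ∈ IB | ∀ b : A, ¬ ρ a bᶜ → φ b ∈ σ'} with hSdef
  -- a useful bound : for a ∈ IB with a ≪ b, (φ aᶜ)ᶜ ≤ φ b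
  have hkey : ∀ a ∈ IB, ∀ b : A, ¬ ρ a bᶜ → (φ aᶜ)ᶜ ≤ φ b := by
    intro a ha b hab
    exact hleη (dlc3 a ha b hab)
  -- non-membership in S for elements of IB
  have hnotS : ∀ {a : A}, a ∈ IB → a ∉ S → ∃ c : A, ¬ ρ a cᶜ ∧ φ c ∉ σ' := by
    intro a ha hn
    by_contra hc
    push_neg at hc
    exact hn ⟨ha, fun b hb => hc b hb⟩
  -- Part 1 : J = IB \ S is a δ-ideal
  have part1 : IsDeltaIdeal ρ IB (IB \ S) := by
    refine ⟨⟨⟨⊥, botIB, ?_⟩, ?_, ?_⟩, fun a ha => ha.1, ?_⟩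
    · -- ⊥ ∉ S
      intro h
      have : φ ⊥ ∈ σ' := h.2 ⊥ (fun hρ => (C2 _ _ hρ).1 rfl)
      rw [dlc1] at this
      exact σbotn this
    · -- downward closed
      rintro a ⟨haIB, haS⟩ b hba
      refine ⟨hIBdn a haIB b hba, ?_⟩
      obtain ⟨c, hac, hcσ⟩ := hnotS haIB haS
      intro hb
      exact hcσ (hb.2 c (fun hρ => hac (ρmono hba le_rfl hρ)))
    · -- closed under joins
      rintro a ⟨haIB, haS⟩ b ⟨hbIB, hbS⟩
      refine ⟨hIBjn a haIB b hbIB, ?_⟩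
      obtain ⟨c, hac, hcσ⟩ := hnotS haIB haS
      obtain ⟨d, hbd, hdσ⟩ := hnotS hbIB hbS
      obtain ⟨c₁, hc₁IB, hac₁, hc₁c⟩ := hBC1 a haIB c hac
      obtain ⟨d₁, hd₁IB, hbd₁, hd₁d⟩ := hBC1 b hbIB d hbd
      intro hS
      have hsup : ¬ ρ (a ⊔ b) (c₁ ⊔ d₁)ᶜ := by
        intro h
        rw [compl_sup] at h
        rcases (C4 _ _ _).mp ((C3 _ _ h)) with h' | h'
        · exact hac₁ (ρmono le_rfl inf_le_left (C3 _ _ h'))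
        · exact hbd₁ (ρmono le_rfl inf_le_right (C3 _ _ h'))
      have hφ : φ (c₁ ⊔ d₁) ∈ σ' := hS.2 _ hsup
      have hbound : φ (c₁ ⊔ d₁) ≤ (φ c₁ᶜ)ᶜ ⊔ (φ d₁ᶜ)ᶜ := by
        have := φcpl (c₁ ⊔ d₁)
        rwa [compl_sup, dlc2, compl_inf] at this
      rcases K2 _ _ (σup hφ hbound) with h' | h'
      · exact hcσ (σup h' (hkey c₁ hc₁IB c hc₁c))
      · exact hdσ (σup h' (hkey d₁ hd₁IB d hd₁d))
    · -- the δ-condition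
      rintro a ⟨haIB, haS⟩
      obtain ⟨c, hac, hcσ⟩ := hnotS haIB haS
      obtain ⟨b, hbIB, hab, hbc⟩ := hBC1 a haIB c hac
      refine ⟨b, ⟨hbIB, ?_⟩, hab⟩
      intro hb
      exact hcσ (hb.2 c hbc)
  refine ⟨part1, ?_⟩
  rintro ⟨b₀, hb₀σ, hb₀IB'⟩ dlc4
  -- a bounded element d ∈ IB' with b₀ ≪η d
  obtain ⟨d₀, hd₀IB', hb₀d₀, -⟩ :=
    hEBC1 b₀ hb₀IB' ⊤ (by rw [compl_top]; intro h; exact (D2 _ _ h).2 rfl)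
  -- Lemma B : every member of σ' can be shrunk to a bounded member of σ'
  have lemB : ∀ g ∈ σ', ∃ s ∈ σ', s ∈ IB' ∧ s ≤ g := by
    intro g hg
    rcases K2 (g ⊓ d₀) (g ⊓ d₀ᶜ) (by rw [← hsplitB g d₀]; exact hg) with h | h
    · exact ⟨g ⊓ d₀, h, hIB'dn d₀ hd₀IB' _ inf_le_right, inf_le_left⟩
    · exfalso
      rcases K1 b₀ hb₀σ _ h with h' | h'
      · exact hb₀d₀ (ηmono le_rfl inf_le_right h')
      · exact h'.1 hb₀IB'
  -- Claim C : if a ∈ S and a ≪ b then (φ b)ᶜ ∉ σ'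
  have claimC : ∀ a ∈ S, ∀ b : A, ¬ ρ a bᶜ → (φ b)ᶜ ∉ σ' := by
    intro a haS b hab hmem
    obtain ⟨p, hpIB, hap, hpb⟩ := hBC1 a haS.1 b hab
    have hφp : φ p ∈ σ' := haS.2 p hap
    obtain ⟨s, hsσ, hsIB', hsle⟩ := lemB (φ p) hφp
    have hnη : ¬ η s (φ b)ᶜ := by
      intro h
      exact dlc3 p hpIB b hpb (ηmono (le_trans hsle (φcpl p)) le_rfl h)
    rcases K1 s hsσ _ hmem with h' | h'
    · exact hnη h'
    · exact h'.1 hsIB'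
  constructor
  · -- J ≠ IB
    obtain ⟨a₀, ha₀IB, hb₀a₀⟩ := dlc4 b₀ hb₀IB'
    have ha₀S : a₀ ∈ S := by
      refine ⟨ha₀IB, fun b hb => σup hb₀σ (le_trans hb₀a₀ (φmono (hle hb)))⟩
    intro h
    have : a₀ ∈ IB \ S := by rw [h]; exact ha₀IB
    exact this.2 ha₀S
  · -- primeness
    intro J₁ J₂ hJ₁ hJ₂ hsub
    by_contra hcon
    push_neg at hcon
    obtain ⟨a₁, ha₁J, ha₁nJ⟩ := Set.not_subset.mp hcon.1
    obtain ⟨a₂, ha₂J, ha₂nJ⟩ := Set.not_subset.mp hcon.2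
    obtain ⟨⟨_, hJ₁dn, _⟩, hJ₁IB, hJ₁δ⟩ := hJ₁
    obtain ⟨⟨_, hJ₂dn, _⟩, hJ₂IB, hJ₂δ⟩ := hJ₂
    have ha₁S : a₁ ∈ S := by
      by_contra h
      exact ha₁nJ ⟨hJ₁IB ha₁J, h⟩
    have ha₂S : a₂ ∈ S := by
      by_contra h
      exact ha₂nJ ⟨hJ₂IB ha₂J, h⟩
    obtain ⟨b₁, hb₁J, hab₁⟩ := hJ₁δ a₁ ha₁J
    obtain ⟨b₂, hb₂J, hab₂⟩ := hJ₂δ a₂ ha₂J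
    have hbJ : b₁ ⊓ b₂ ∈ IB \ S :=
      hsub ⟨hJ₁dn b₁ hb₁J _ inf_le_left, hJ₂dn b₂ hb₂J _ inf_le_right⟩
    obtain ⟨e, hbe, heσ⟩ := hnotS hbJ.1 hbJ.2
    obtain ⟨m, hmIB, hbm, hme⟩ := hBC1 _ hbJ.1 e hbe
    have hw : (φ mᶜ)ᶜ ∉ σ' := fun h => heσ (σup h (hkey m hmIB e hme))
    -- a₂ ≪ m ⊔ b₁ᶜ
    have hu : ¬ ρ a₂ (m ⊔ b₁ᶜ)ᶜ := by
      intro h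
      rw [compl_sup, compl_compl] at h
      rw [hsplitA (mᶜ ⊓ b₁) b₂] at h
      rcases (C4 _ _ _).mp h with h' | h'
      · have hne := (C2 _ _ h').2
        have hself := C1 _ hne
        exact hbm (ρmono (le_inf (le_trans inf_le_left inf_le_right) inf_le_right)
          (le_trans inf_le_left inf_le_left) hself)
      · exact hab₂ (ρmono le_rfl inf_le_right h')
    have hφu : φ (m ⊔ b₁ᶜ) ∈ σ' := ha₂S.2 _ hu
    have hbound : φ (m ⊔ b₁ᶜ) ≤ (φ mᶜ)ᶜ ⊔ (φ b₁)ᶜ := by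
      have := φcpl (m ⊔ b₁ᶜ)
      rwa [compl_sup, compl_compl, dlc2, compl_inf] at this
    rcases K2 _ _ (σup hφu hbound) with h' | h'
    · exact hw h'
    · exact claimC a₁ ha₁S b₁ hab₁ h'
end
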